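/- arXiv:2107.12594 — 9 statements merged into one kernel-verified Lean document; each statement's English description precedes it below -/
import Mathlib

section
/- Let q be a prime power, let m ≥ 1 be an integer, and let s be an integer with 0 ≤ s ≤ m(q-1). Write s = mt + r with t, r nonnegative integers and 0 ≤ r ≤ m-1. Then the maximum of the product (q-i_1)(q-i_2)⋯(q-i_m) over all integer tuples (i_1,…,i_m) with 0 ≤ i_j ≤ q-1 for all j and i_1 + ⋯ + i_m = s equals (q-t-1)^r (q-t)^{m-r}. -/
open MvPolynomial Finset Pointwise

noncomputable section

/-- Evaluation of a multivariate polynomial at all points of `F^m`. -/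
def evalPt {F : Type} [Field F] {m : ℕ} (f : MvPolynomial (Fin m) F) : (Fin m → F) → F :=
  fun P => MvPolynomial.eval P f

/-- The monomial code `C_A = ev(F_q[A])`, the evaluations of the polynomials
whose monomial support is contained in `A`. -/
def monomialCode (F : Type) [Field F] (m : ℕ) (A : Set (Fin m →₀ ℕ)) :
    Set ((Fin m → F) → F) :=
  { v | ∃ f : MvPolynomial (Fin m) F, (↑f.support : Set (Fin m →₀ ℕ)) ⊆ A ∧ v = evalPt f }

/-- Exponent set of the Reed–Muller code `RM_q(s,m)` (empty when `s < 0`). -/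
def RMset (q m : ℕ) (s : ℤ) : Set (Fin m →₀ ℕ) :=
  { i | (∀ j, i j < q) ∧ (∑ j, (i j : ℤ)) ≤ s }

/-- Exponent set of the hyperbolic code `Hyp_q(d,m)`. -/
def Hypset (q m d : ℕ) : Set (Fin m →₀ ℕ) :=
  { i | (∀ j, i j < q) ∧ d ≤ ∏ j, (q - i j) }

/-- Exponent set of the cube code `Cube_q(s,m)`. -/
def Cubeset (m s : ℕ) : Set (Fin m →₀ ℕ) :=
  { i | ∀ j, i j ≤ s }

/-- Minimum distance of a code: least Hamming weight of a nonzero codeword. -/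
def minDist {F : Type} [Field F] [Fintype F] [DecidableEq F] {m : ℕ}
    (C : Set ((Fin m → F) → F)) : ℕ :=
  sInf { w | ∃ v ∈ C, v ≠ 0 ∧ hammingNorm v = w }

/-- Hamming distance from a word to a code. -/
def distToCode {F : Type} [Field F] [Fintype F] [DecidableEq F] {m : ℕ}
    (y : (Fin m → F) → F) (C : Set ((Fin m → F) → F)) : ℕ :=
  sInf { w | ∃ c ∈ C, hammingDist y c = w }

/-- `i`-fold Minkowski sum of `H` with itself (`0`-fold sum is `{0}`). -/
def iMink {m : ℕ} (H : Set (Fin m →₀ ℕ)) : ℕ → Set (Fin m →₀ ℕ)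
  | 0 => {0}
  | i + 1 => iMink H i + H

/-- The sets `L(d,r,i)` from the Geil–Matsumoto list-decoding algorithm. -/
def Lset (q m d r i : ℕ) : Set (Fin m →₀ ℕ) :=
  { a | (∀ j, a j < q) ∧ ∀ x ∈ iMink (Hypset q m d) i, a + x ∈ Hypset q m (r + 1) }

lemma split3prod {m : ℕ} (f : Fin m → ℕ) (j k : Fin m) (h : j ≠ k) :
    ∏ l, f l = f j * f k * ∏ l ∈ (univ.erase j).erase k, f l := by
  have hk : k ∈ univ.erase j := Finset.mem_erase.2 ⟨h.symm, Finset.mem_univ k⟩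
  rw [← Finset.mul_prod_erase univ f (Finset.mem_univ j),
    ← Finset.mul_prod_erase (univ.erase j) f hk, mul_assoc]

lemma split3sum {m : ℕ} (f : Fin m → ℕ) (j k : Fin m) (h : j ≠ k) :
    ∑ l, f l = f j + f k + ∑ l ∈ (univ.erase j).erase k, f l := by
  have hk : k ∈ univ.erase j := Finset.mem_erase.2 ⟨h.symm, Finset.mem_univ k⟩
  rw [← Finset.add_sum_erase univ f (Finset.mem_univ j),
    ← Finset.add_sum_erase (univ.erase j) f hk, add_assoc]

lemma balanced_eq (q m t r : ℕ) (i : Fin m → ℕ)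
    (hbal : ∀ j k, i j ≤ i k + 1) (hsum : ∑ j, i j = m * t + r) (hr : r < m) :
    ∏ j, (q - i j) = (q - t - 1) ^ r * (q - t) ^ (m - r) := by
  classical
  have hval : ∀ j, i j = t ∨ i j = t + 1 := by
    intro j
    by_contra h
    push_neg at h
    obtain ⟨h1, h2⟩ := h
    rcases lt_or_gt_of_ne h1 with hlt | hgt
    · -- i j < t
      have hub : ∀ k, i k ≤ t := fun k => by have := hbal k j; omega
      have hsum2 : ∑ l, i l = i j + ∑ l ∈ univ.erase j, i l :=
        (Finset.add_sum_erase univ i (Finset.mem_univ j)).symm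
      have hle : ∑ l ∈ univ.erase j, i l ≤ (m - 1) * t := by
        calc ∑ l ∈ univ.erase j, i l ≤ ∑ _l ∈ univ.erase j, t :=
              Finset.sum_le_sum fun l _ => hub l
          _ = (m - 1) * t := by
              rw [Finset.sum_const, smul_eq_mul, Finset.card_erase_of_mem (Finset.mem_univ j),
                Finset.card_univ, Fintype.card_fin]
      have hmt : (m - 1) * t + t = m * t := by
        cases m with
        | zero => omega
        | succ n => simp [Nat.succ_sub_one, Nat.succ_mul]
      omega
    · -- i j > t + 1
      have hlb : ∀ k, t + 1 ≤ i k := fun k => by have := hbal j k; omega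
      have : m * (t + 1) ≤ ∑ l, i l := by
        calc m * (t+1) = ∑ _l : Fin m, (t+1) := by
              rw [Finset.sum_const, smul_eq_mul, Finset.card_univ, Fintype.card_fin]
          _ ≤ ∑ l, i l := Finset.sum_le_sum fun l _ => hlb l
      have hmt : m * (t + 1) = m * t + m := by ring
      omega
  set A := univ.filter (fun j => i j = t + 1) with hA
  have hAcard_le : A.card ≤ m := by
    simpa using Finset.card_filter_le univ (fun j => i j = t + 1)
  have hsplit : ∑ j ∈ A, i j + ∑ j ∈ univ.filter (fun j => ¬ i j = t + 1), i j = ∑ j, i j :=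
    Finset.sum_filter_add_sum_filter_not univ _ i
  have hcardsplit : A.card + (univ.filter (fun j => ¬ i j = t + 1)).card = m := by
    rw [hA, Finset.card_filter_add_card_filter_not]
    simp
  have hsA : ∑ j ∈ A, i j = A.card * (t + 1) := by
    rw [Finset.sum_congr rfl (fun j hj => (Finset.mem_filter.1 hj).2), Finset.sum_const,
      smul_eq_mul]
  have hsB : ∑ j ∈ univ.filter (fun j => ¬ i j = t + 1), i j
      = (univ.filter (fun j => ¬ i j = t + 1)).card * t := by
    rw [Finset.sum_congr rfl (fun j hj => by
      have := (Finset.mem_filter.1 hj).2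
      rcases hval j with h | h
      · exact h
      · exact absurd h this), Finset.sum_const, smul_eq_mul]
  have hcardA : A.card = r := by
    set c := A.card
    set c' := (univ.filter (fun j => ¬ i j = t + 1)).card
    have e1 : c * (t + 1) = c * t + c := by ring
    have e2 : c * t + c' * t = m * t := by
      rw [← add_mul]
      have : c + c' = m := hcardsplit
      rw [this]
    omega
  have hprod : (∏ j ∈ A, (q - i j)) * ∏ j ∈ univ.filter (fun j => ¬ i j = t + 1), (q - i j)
      = ∏ j, (q - i j) := Finset.prod_filter_mul_prod_filter_not univ _ _
  have hpA : ∏ j ∈ A, (q - i j) = (q - t - 1) ^ r := by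
    have : ∀ j ∈ A, q - i j = q - t - 1 := fun j hj => by
      have := (Finset.mem_filter.1 hj).2; omega
    rw [Finset.prod_congr rfl this, Finset.prod_const, hcardA]
  have hpB : ∏ j ∈ univ.filter (fun j => ¬ i j = t + 1), (q - i j) = (q - t) ^ (m - r) := by
    rw [Finset.prod_congr rfl (fun j hj => by
      have := (Finset.mem_filter.1 hj).2
      rcases hval j with h | h
      · rw [h]
      · exact absurd h this), Finset.prod_const]
    congr 1
    omega
  rw [← hprod, hpA, hpB]

lemma upper_bound (q m t r : ℕ) (hq : 2 ≤ q) (hr : r < m) :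
    ∀ N : ℕ, ∀ i : Fin m → ℕ, (∑ j, (i j) * (i j)) ≤ N → (∀ j, i j ≤ q - 1) →
    (∑ j, i j) = m * t + r →
    ∏ j, (q - i j) ≤ (q - t - 1) ^ r * (q - t) ^ (m - r) := by
  intro N
  induction N using Nat.strong_induction_on with
  | _ N IH =>
    intro i hN hub hsum
    by_cases hbal : ∀ j k, i j ≤ i k + 1
    · exact le_of_eq (balanced_eq q m t r i hbal hsum hr)
    · push_neg at hbal
      obtain ⟨j, k, hjk2⟩ := hbal
      have hjk2' : i k + 2 ≤ i j := hjk2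
      have hne : j ≠ k := by intro h; rw [h] at hjk2'; omega
      set i' : Fin m → ℕ :=
        Function.update (Function.update i j (i j - 1)) k (i k + 1) with hi'
      have hij : i' j = i j - 1 := by
        rw [hi', Function.update_of_ne hne, Function.update_self]
      have hik : i' k = i k + 1 := by rw [hi', Function.update_self]
      have hrest : ∀ l, l ≠ j → l ≠ k → i' l = i l := by
        intro l hlj hlk
        rw [hi', Function.update_of_ne hlk, Function.update_of_ne hlj]
      have hrestS : ∑ l ∈ (univ.erase j).erase k, i' l = ∑ l ∈ (univ.erase j).erase k, i l :=
        Finset.sum_congr rfl fun l hl => by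
          have h1 := Finset.mem_erase.1 hl
          have h2 := Finset.mem_erase.1 h1.2
          exact hrest l h2.1 h1.1
      have hrestS2 : ∑ l ∈ (univ.erase j).erase k, i' l * i' l
          = ∑ l ∈ (univ.erase j).erase k, i l * i l :=
        Finset.sum_congr rfl fun l hl => by
          have h1 := Finset.mem_erase.1 hl
          have h2 := Finset.mem_erase.1 h1.2
          rw [hrest l h2.1 h1.1]
      have hrestP : ∏ l ∈ (univ.erase j).erase k, (q - i' l)
          = ∏ l ∈ (univ.erase j).erase k, (q - i l) :=
        Finset.prod_congr rfl fun l hl => by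
          have h1 := Finset.mem_erase.1 hl
          have h2 := Finset.mem_erase.1 h1.2
          rw [hrest l h2.1 h1.1]
      -- new sum equals old
      have hsum' : ∑ l, i' l = m * t + r := by
        rw [split3sum i' j k hne, hij, hik, hrestS, ← hsum, split3sum i j k hne]
        omega
      -- new bounds
      have hub' : ∀ l, i' l ≤ q - 1 := by
        intro l
        by_cases hlj : l = j
        · rw [hlj, hij]; have := hub j; omega
        · by_cases hlk : l = k
          · rw [hlk, hik]; have := hub j; omega
          · rw [hrest l hlj hlk]; exact hub l
      -- measure decreases
      have hmeas : ∑ l, i' l * i' l < ∑ l, i l * i l := by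
        rw [split3sum (fun l => i' l * i' l) j k hne, split3sum (fun l => i l * i l) j k hne,
          hij, hik, hrestS2]
        have hkey : (i j - 1) * (i j - 1) + (i k + 1) * (i k + 1) < i j * i j + i k * i k := by
          obtain ⟨a, ha⟩ : ∃ a, i j = a + 1 := ⟨i j - 1, by omega⟩
          rw [ha, Nat.add_sub_cancel]
          nlinarith
        omega
      have hNlt : ∑ l, i' l * i' l < N := lt_of_lt_of_le hmeas hN
      have hstep := IH (∑ l, i' l * i' l) hNlt i' le_rfl hub' hsum'
      refine le_trans ?_ hstep
      -- product increases
      rw [split3prod (fun l => q - i l) j k hne, split3prod (fun l => q - i' l) j k hne,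
        hij, hik, hrestP]
      apply Nat.mul_le_mul_right
      have hq1 : i j ≤ q - 1 := hub j
      obtain ⟨u, hu⟩ : ∃ u, q - i j = u := ⟨_, rfl⟩
      obtain ⟨w, hw⟩ : ∃ w, q - (i k + 1) = w := ⟨_, rfl⟩
      have e1 : q - (i j - 1) = u + 1 := by omega
      have e2 : q - i k = w + 1 := by omega
      have huw : u ≤ w := by omega
      rw [hu, e2, e1, hw]
      calc u * (w + 1) = u * w + u := by ring
        _ ≤ u * w + w := Nat.add_le_add_left huw _
        _ = (u + 1) * w := by ring

/-- the maximum of `(q-i₁)⋯(q-iₘ)` over tuples in `{0,…,q-1}^m`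
with coordinate sum `s = mt + r` equals `(q-t-1)^r (q-t)^{m-r}`. -/
theorem statement0 (q m s t r : ℕ) (hq : IsPrimePow q) (hm : 1 ≤ m)
    (hs : s ≤ m * (q - 1)) (hstr : s = m * t + r) (hr : r ≤ m - 1) :
    IsGreatest
      {p : ℕ | ∃ i : Fin m → ℕ, (∀ j, i j ≤ q - 1) ∧ (∑ j, i j) = s ∧ p = ∏ j, (q - i j)}
      ((q - t - 1) ^ r * (q - t) ^ (m - r)) := by
  classical
  have hq2 : 2 ≤ q := hq.two_le
  have hrm : r < m := by omega
  have ht : t ≤ q - 1 := by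
    have h1 : m * t ≤ m * (q - 1) := by omega
    exact Nat.le_of_mul_le_mul_left h1 (by omega)
  have ht' : 1 ≤ r → t + 1 ≤ q - 1 := by
    intro h1
    have h2 : m * t < m * (q - 1) := by omega
    have := Nat.lt_of_mul_lt_mul_left h2
    omega
  constructor
  · -- membership
    set i : Fin m → ℕ := fun j => if (j : ℕ) < r then t + 1 else t with hi
    refine ⟨i, ?_, ?_, ?_⟩
    · intro j
      rw [hi]
      by_cases h : (j : ℕ) < r
      · simp only [h, if_true]; exact ht' (by omega)
      · simp only [h, if_false]; exact ht
    · have hfilt : (univ.filter (fun j : Fin m => (j : ℕ) < r)) =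
          (Finset.range r).attachFin (fun x hx => lt_trans (Finset.mem_range.1 hx) hrm) := by
        ext j
        simp [Finset.mem_attachFin]
      have hcard : (univ.filter (fun j : Fin m => (j : ℕ) < r)).card = r := by
        rw [hfilt, Finset.card_attachFin, Finset.card_range]
      have hcard' : (univ.filter (fun j : Fin m => ¬ (j : ℕ) < r)).card = m - r := by
        have := Finset.card_filter_add_card_filter_not (s := univ)
          (p := fun j : Fin m => (j : ℕ) < r)
        simp only [Finset.card_univ, Fintype.card_fin] at this
        omega
      rw [hi]
      rw [Finset.sum_ite, Finset.sum_const, Finset.sum_const, hcard, hcard',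
        smul_eq_mul, smul_eq_mul, hstr]
      have : (m - r) * t + r * t = m * t := by
        rw [← add_mul, Nat.sub_add_cancel hrm.le]
      have e1 : r * (t + 1) = r * t + r := by ring
      omega
    · have hfilt : (univ.filter (fun j : Fin m => (j : ℕ) < r)) =
          (Finset.range r).attachFin (fun x hx => lt_trans (Finset.mem_range.1 hx) hrm) := by
        ext j
        simp [Finset.mem_attachFin]
      have hcard : (univ.filter (fun j : Fin m => (j : ℕ) < r)).card = r := by
        rw [hfilt, Finset.card_attachFin, Finset.card_range]
      have hcard' : (univ.filter (fun j : Fin m => ¬ (j : ℕ) < r)).card = m - r := by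
        have := Finset.card_filter_add_card_filter_not (s := univ)
          (p := fun j : Fin m => (j : ℕ) < r)
        simp only [Finset.card_univ, Fintype.card_fin] at this
        omega
      have : ∀ j : Fin m, q - i j = if (j : ℕ) < r then q - (t + 1) else q - t := by
        intro j; rw [hi]; simp only []; split <;> rfl
      rw [Finset.prod_congr rfl (fun j _ => this j), Finset.prod_ite,
        Finset.prod_const, Finset.prod_const, hcard, hcard', Nat.sub_sub]
  · -- upper bound
    rintro p ⟨i, hub, hsum, rfl⟩
    exact upper_bound q m t r hq2 hrm (∑ j, i j * i j) i le_rfl hub (by omega)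
end
end

section
/- Let m ≥ 1 and let s be an integer with 0 ≤ s < m(q-1). Let δ be the minimum distance of the Reed–Muller code RM_q(s,m), and write s+1 = mt + r with t, r nonnegative integers and 0 ≤ r < m. Then RM_q(s,m) equals the hyperbolic code Hyp_q(d',m) for some integer d' ≥ 1 if and only if (q-t-1)^r (q-t)^{m-r} < δ; moreover, in this case RM_q(s,m) = Hyp_q(δ,m). -/
open MvPolynomial Finset Pointwise

noncomputable section

/-!
Write `P(i) = ∏ j, (q - i j)`. For a lower set `A` of exponents in the box `{0,…,q-1}^m`, the
minimum distance of `C_A` is the least `P(i)` with `i ∈ A`. The lower bound is the footprint bound,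
proved one variable at a time: on each line over a point where the leading coefficient (of degree
`k` in the split-off variable) does not vanish, a nonzero polynomial has at least `q - k` nonzero
values. Products of linear factors `X j - c` attain `P(i)`. The footprint bound also shows that a
monomial code with exponents in the box determines its exponent set, so `RM_q(s,m)` is hyperbolic
iff `R = H(d)` for some `d`, which happens iff `δ` exceeds `P(i)` for every `i` in the box of degree
`> s`. The largest such `P(i)` is `(q-t-1)^r (q-t)^(m-r)`, attained at the exponent with `r` entries
`t+1` and `m-r` entries `t`: moving a unit from a larger to a smaller factor does not decrease a
product of naturals with fixed sum.
-/

open Function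

section Balancing

theorem pow_mul_succ_pow_le_pow_mul_succ_pow {b c u u' v w : ℕ} (hn : v + w = u + u')
    (h : v * (c + 1) + w * c ≤ u * (b + 1) + u' * b) :
    c ^ w * (c + 1) ^ v ≤ b ^ u' * (b + 1) ^ u := by
  rcases lt_trichotomy c b with hcb | rfl | hbc
  · calc c ^ w * (c + 1) ^ v ≤ (c + 1) ^ w * (c + 1) ^ v := by gcongr; omega
      _ = (c + 1) ^ (u' + u) := by rw [← pow_add]; congr 1; omega
      _ ≤ b ^ (u' + u) := by gcongr; omega
      _ ≤ b ^ u' * (b + 1) ^ u := by rw [pow_add]; gcongr; omega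
  · have hvu : v ≤ u := by nlinarith
    obtain ⟨k, rfl⟩ := Nat.exists_eq_add_of_le hvu
    obtain rfl : w = u' + k := by omega
    calc c ^ (u' + k) * (c + 1) ^ v ≤ c ^ u' * (c + 1) ^ k * (c + 1) ^ v := by
          rw [pow_add]; gcongr; omega
      _ = c ^ u' * (c + 1) ^ (v + k) := by ring
  · have hv : v = 0 := by nlinarith
    have hu' : u' = 0 := by nlinarith
    subst hv hu'
    obtain rfl : w = u := by omega
    obtain rfl | hw := Nat.eq_zero_or_pos w
    · simp
    obtain rfl : c = b + 1 := by nlinarith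
    simp

@[to_additive]
theorem prod_comp_update_update_mul {ι α M : Type*} [Fintype ι] [DecidableEq ι] [CommMonoid M]
    (g : α → M) (f : ι → α) {j k : ι} (hjk : j ≠ k) (a c : α) :
    (∏ i, g (update (update f j a) k c i)) * (g (f j) * g (f k)) =
      (∏ i, g (f i)) * (g a * g c) := by
  have hj : j ∈ (univ : Finset ι) \ {k} := by simp [hjk]
  simp only [apply_update (fun _ => g)]
  rw [prod_update_of_mem (mem_univ k), prod_update_of_mem hj,
    prod_eq_mul_prod_sdiff_singleton_of_mem (mem_univ k) (fun i => g (f i)),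
    prod_eq_mul_prod_sdiff_singleton_of_mem hj (fun i => g (f i))]
  ac_rfl

theorem prod_le_pow_mul_succ_pow_of_sum_le_of_le_add_one {ι : Type*} [Fintype ι] {y : ι → ℕ}
    {b u : ℕ} (hu : u ≤ Fintype.card ι) (hy : ∑ j, y j ≤ Fintype.card ι * b + u)
    (hbal : ∀ j k, y j ≤ y k + 1) : ∏ j, y j ≤ b ^ (Fintype.card ι - u) * (b + 1) ^ u := by
  classical
  rcases isEmpty_or_nonempty ι with hι | hι
  · have hu0 : u = 0 := by simpa using hu
    simp [hu0]
  obtain ⟨k0, -, hmin⟩ := exists_min_image univ y univ_nonempty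
  set c := y k0
  have hlevel : ∀ j, y j = if y j = c + 1 then c + 1 else c := fun j => by
    have := hmin j (mem_univ j); have := hbal j k0; split_ifs <;> omega
  have hcard := card_filter_add_card_filter_not (s := univ) (fun j => y j = c + 1)
  rw [card_univ] at hcard
  rw [prod_congr rfl fun j _ => hlevel j, prod_ite, prod_const, prod_const, mul_comm]
  rw [sum_congr rfl fun j _ => hlevel j, sum_ite, sum_const, sum_const, smul_eq_mul,
    smul_eq_mul] at hy
  have htarget : Fintype.card ι * b + u = u * (b + 1) + (Fintype.card ι - u) * b := by
    obtain ⟨u', hu'⟩ := Nat.exists_eq_add_of_le hu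
    rw [hu', Nat.add_sub_cancel_left]
    ring
  exact pow_mul_succ_pow_le_pow_mul_succ_pow (by omega) (htarget ▸ hy)

theorem prod_le_pow_mul_succ_pow_of_sum_le {ι : Type*} [Fintype ι] (y : ι → ℕ) {b u : ℕ}
    (hu : u ≤ Fintype.card ι) (hy : ∑ j, y j ≤ Fintype.card ι * b + u) :
    ∏ j, y j ≤ b ^ (Fintype.card ι - u) * (b + 1) ^ u := by
  classical
  induction hV : ∑ j, y j ^ 2 using Nat.strong_induction_on generalizing y with
  | _ V ih =>
  by_cases hsmooth : ∃ j k, y k + 2 ≤ y j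
  · obtain ⟨j, k, hjk⟩ := hsmooth
    obtain ⟨a, ha⟩ : ∃ a, y j = a + 1 := ⟨y j - 1, by omega⟩
    have hne : j ≠ k := by rintro rfl; omega
    have hsum := sum_comp_update_update_add id y hne a (y k + 1)
    have hsq := sum_comp_update_update_add (· ^ 2) y hne a (y k + 1)
    have hprod := prod_comp_update_update_mul id y hne a (y k + 1)
    simp only [id, ha] at hsum hsq hprod
    rw [ha] at hjk
    refine le_trans ?_ (ih _ ?_ (update (update y j a) k (y k + 1)) (by omega) rfl)
    · rcases Nat.eq_zero_or_pos (y k) with hk | hk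
      · exact (prod_eq_zero (mem_univ k) hk).trans_le (Nat.zero_le _)
      refine Nat.le_of_mul_le_mul_right (c := (a + 1) * y k) ?_ (by positivity)
      rw [hprod]
      exact Nat.mul_le_mul_left _ (by nlinarith)
    · nlinarith
  · push Not at hsmooth
    exact prod_le_pow_mul_succ_pow_of_sum_le_of_le_add_one hu hy fun j k => by
      have := hsmooth j k; omega

end Balancing

section Parameters

variable {m q s t r : ℕ}

theorem lt_of_add_one_eq_mul_add (hstr : s + 1 = m * t + r) (hr : r < m)
    (hs : s < m * (q - 1)) : t < q ∧ (r ≠ 0 → t + 1 < q) := by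
  have hq : 0 < q - 1 := Nat.pos_of_mul_pos_left (a := m) (by omega)
  refine ⟨?_, fun hr0 => ?_⟩
  · have := Nat.le_of_mul_le_mul_left (c := m) (by omega : m * t ≤ m * (q - 1)) (by omega)
    omega
  · have := Nat.lt_of_mul_lt_mul_left (a := m) (by omega : m * t < m * (q - 1))
    omega

theorem prod_sub_le_of_lt_sum (hstr : s + 1 = m * t + r) (hr : r < m)
    (hs : s < m * (q - 1)) {i : Fin m → ℕ} (hi : ∀ j, i j ≤ q) (hsum : s < ∑ j, i j) :
    ∏ j, (q - i j) ≤ (q - t - 1) ^ r * (q - t) ^ (m - r) := by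
  obtain ⟨c, rfl⟩ : ∃ c, q = t + 1 + c :=
    ⟨q - t - 1, by have := (lt_of_add_one_eq_mul_add hstr hr hs).1; omega⟩
  have hcompl : ∑ j, (t + 1 + c - i j) + ∑ j, i j = m * t + m + m * c := by
    rw [← sum_add_distrib]
    simp [Nat.sub_add_cancel (hi _)]
    ring
  have hbound := prod_le_pow_mul_succ_pow_of_sum_le (fun j => t + 1 + c - i j) (b := c)
    (u := m - r) (by simp) (by simp only [Fintype.card_fin]; omega)
  simpa [Nat.sub_sub_self hr.le, show t + 1 + c - t - 1 = c by omega,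
    show t + 1 + c - t = c + 1 by omega] using hbound

theorem exists_lt_sum_prod_sub_eq (hstr : s + 1 = m * t + r) (hr : r < m)
    (hs : s < m * (q - 1)) :
    ∃ i : Fin m → ℕ, (∀ j, i j < q) ∧ s < ∑ j, i j ∧
      ∏ j, (q - i j) = (q - t - 1) ^ r * (q - t) ^ (m - r) := by
  classical
  obtain ⟨ht, ht'⟩ := lt_of_add_one_eq_mul_add hstr hr hs
  obtain ⟨S, -, hS⟩ := exists_subset_card_eq (s := (univ : Finset (Fin m))) (n := r)
    (by simp; omega)
  have hSc : #{j | j ∉ S} = m - r := by simp [filter_not, card_univ_sdiff, hS]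
  refine ⟨fun j => if j ∈ S then t + 1 else t, fun j => ?_, ?_, ?_⟩
  · dsimp only
    split_ifs with hj
    · exact ht' (hS ▸ (card_pos.2 ⟨j, hj⟩).ne')
    · exact ht
  · simp only [sum_ite, sum_const, filter_mem_eq_inter, univ_inter, hS, hSc, smul_eq_mul]
    obtain ⟨w, rfl⟩ := Nat.exists_eq_add_of_lt hr
    rw [show r + w + 1 - r = w + 1 by omega]
    nlinarith
  · simp [apply_ite, prod_ite, hS, hSc, Nat.sub_add_eq]

end Parameters

section Footprint

variable {F : Type} [Field F] [Fintype F] [DecidableEq F]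

theorem Polynomial.card_sub_natDegree_le_card_eval_ne_zero {p : Polynomial F} (hp : p ≠ 0) :
    Fintype.card F - p.natDegree ≤ #{x | p.eval x ≠ 0} := by
  have hroots : #{x | p.eval x = 0} ≤ p.natDegree :=
    Polynomial.card_le_degree_of_subset_roots fun x hx => by
      simp_all [Polynomial.mem_roots hp]
  have := card_filter_add_card_filter_not (s := univ) (fun x => p.eval x = 0)
  simp only [card_univ, ← ne_eq] at this
  omega

theorem card_filter_eq_sum_card_filter_cons {α : Type*} [Fintype α] {m : ℕ} (Q : (Fin (m + 1) → α) → Prop)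
    [DecidablePred Q] : #{P | Q P} = ∑ p : Fin m → α, #{y | Q (Fin.cons y p)} := by
  simp only [card_filter]
  rw [← (Fin.consEquiv fun _ => α).sum_comp, Fintype.sum_prod_type, sum_comm]
  rfl

theorem exists_mem_support_prod_le_card_eval_ne_zero {m : ℕ} {f : MvPolynomial (Fin m) F}
    (hf : f ≠ 0) : ∃ e ∈ f.support, ∏ j, (Fintype.card F - e j) ≤ #{P | eval P f ≠ 0} := by
  induction m with
  | zero =>
    obtain ⟨c, rfl⟩ := C_surjective (Fin 0) f
    have hc : c ≠ 0 := by rintro rfl; simp at hf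
    exact ⟨0, by simp [hc], by simp [hc]⟩
  | succ m ih =>
    set g := finSuccEquiv F m f
    set k := g.natDegree
    have hlc : g.leadingCoeff ≠ 0 := by simpa [g] using hf
    obtain ⟨e, he, hcard⟩ := ih hlc
    refine ⟨Finsupp.cons k e, mem_support_coeff_finSuccEquiv.mp he, ?_⟩
    have hfiber : ∀ p ∈ ({p | eval p g.leadingCoeff ≠ 0} : Finset (Fin m → F)),
        Fintype.card F - k ≤ #{y | eval (Fin.cons y p) f ≠ 0} := fun p hp => by
      replace hp := (mem_filter.1 hp).2
      have hdeg : (g.map (eval p)).natDegree = k :=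
        Polynomial.natDegree_map_of_leadingCoeff_ne_zero _ hp
      have hne : g.map (eval p) ≠ 0 := fun h => hp <| by
        rw [← Polynomial.leadingCoeff_map_of_leadingCoeff_ne_zero _ hp, h,
          Polynomial.leadingCoeff_zero]
      simpa only [hdeg, eval_eq_eval_mv_eval'] using
        Polynomial.card_sub_natDegree_le_card_eval_ne_zero hne
    calc ∏ j, (Fintype.card F - Finsupp.cons k e j)
        = (Fintype.card F - k) * ∏ j, (Fintype.card F - e j) := by
          simp [Fin.prod_univ_succ]
      _ ≤ #{p | eval p g.leadingCoeff ≠ 0} • (Fintype.card F - k) := by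
          rw [smul_eq_mul, mul_comm]; gcongr
      _ ≤ ∑ p ∈ {p | eval p g.leadingCoeff ≠ 0}, #{y | eval (Fin.cons y p) f ≠ 0} :=
          card_nsmul_le_sum _ _ _ hfiber
      _ ≤ ∑ p, #{y | eval (Fin.cons y p) f ≠ 0} := sum_le_sum_of_subset (filter_subset _ _)
      _ = #{P | eval P f ≠ 0} := (card_filter_eq_sum_card_filter_cons fun P => eval P f ≠ 0).symm

theorem exists_support_le_card_eval_ne_zero_eq {m : ℕ} (i : Fin m →₀ ℕ)
    (hi : ∀ j, i j ≤ Fintype.card F) :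
    ∃ f : MvPolynomial (Fin m) F, (∀ e ∈ f.support, e ≤ i) ∧
      #{P | eval P f ≠ 0} = ∏ j, (Fintype.card F - i j) := by
  choose S _ hS using fun j => exists_subset_card_eq (s := (univ : Finset F)) (n := i j)
    (by simpa using hi j)
  refine ⟨∏ j, ∏ c ∈ S j, (X j - C c), fun e he => Finsupp.le_def.2 fun j => ?_, ?_⟩
  · calc e j ≤ degreeOf j (∏ j, ∏ c ∈ S j, (X j - C c) : MvPolynomial (Fin m) F) :=
          monomial_le_degreeOf j he
      _ ≤ ∑ k, ∑ c ∈ S k, degreeOf j (X k - C c : MvPolynomial (Fin m) F) :=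
          (degreeOf_prod_le _ _ _).trans (sum_le_sum fun k _ => degreeOf_prod_le _ _ _)
      _ ≤ ∑ k, ∑ c ∈ S k, if j = k then 1 else 0 := by
          gcongr with k _ c _
          exact (degreeOf_sub_le _ _ _).trans (by simp [degreeOf_X, degreeOf_C])
      _ = i j := by simp [hS]
  · have hnz : ({P | eval P (∏ j, ∏ c ∈ S j, (X j - C c)) ≠ 0} : Finset (Fin m → F)) =
        Fintype.piFinset fun j => (S j)ᶜ := by
      ext P
      simp [prod_ne_zero_iff, sub_eq_zero]
    rw [hnz, Fintype.card_piFinset]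
    simp [card_compl, hS]

end Footprint

section MonomialCodes

variable {F : Type} [Field F] [Fintype F] [DecidableEq F] {m : ℕ}

theorem eq_of_evalPt_eq {f g : MvPolynomial (Fin m) F}
    (hf : ∀ e ∈ f.support, ∀ j, e j < Fintype.card F)
    (hg : ∀ e ∈ g.support, ∀ j, e j < Fintype.card F) (h : evalPt f = evalPt g) : f = g := by
  by_contra hne
  obtain ⟨e, he, hcard⟩ := exists_mem_support_prod_le_card_eval_ne_zero (sub_ne_zero.2 hne)
  have he_box : ∀ j, e j < Fintype.card F := by
    rcases mem_union.1 (support_sub _ f g he) with he | he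
    exacts [hf e he, hg e he]
  have hzero : #{P | eval P (f - g) ≠ 0} = 0 := by
    rw [card_eq_zero, filter_eq_empty_iff]
    intro P _
    rw [map_sub, not_not, sub_eq_zero]
    exact congrFun h P
  have : 0 < ∏ j, (Fintype.card F - e j) := prod_pos fun j _ => Nat.sub_pos_of_lt (he_box j)
  omega

theorem eq_of_monomialCode_eq {A B : Set (Fin m →₀ ℕ)}
    (hA : ∀ i ∈ A, ∀ j, i j < Fintype.card F) (hB : ∀ i ∈ B, ∀ j, i j < Fintype.card F)
    (h : monomialCode F m A = monomialCode F m B) : A = B := by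
  suffices key : ∀ {A B : Set (Fin m →₀ ℕ)}, (∀ i ∈ A, ∀ j, i j < Fintype.card F) →
      (∀ i ∈ B, ∀ j, i j < Fintype.card F) → monomialCode F m A ⊆ monomialCode F m B → A ⊆ B from
    (key hA hB h.le).antisymm (key hB hA h.ge)
  intro A B hA hB h i hi
  have hmono : ((monomial i (1 : F)).support : Set (Fin m →₀ ℕ)) = {i} := by
    simp [support_monomial]
  obtain ⟨f, hfB, hf⟩ := h ⟨monomial i 1, hmono ▸ Set.singleton_subset_iff.2 hi, rfl⟩
  have hfi := eq_of_evalPt_eq (by simpa [support_monomial] using hA i hi)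
    (fun e he => hB e (hfB he)) hf
  exact hfB (by simp [← hfi, support_monomial])

theorem minDist_le_hammingNorm {C : Set ((Fin m → F) → F)} {v : (Fin m → F) → F} (hv : v ∈ C)
    (hv0 : v ≠ 0) : minDist C ≤ hammingNorm v :=
  Nat.sInf_le ⟨v, hv, hv0, rfl⟩

theorem exists_hammingNorm_eq_minDist {C : Set ((Fin m → F) → F)} (h : ∃ v ∈ C, v ≠ 0) :
    ∃ v ∈ C, v ≠ 0 ∧ hammingNorm v = minDist C := by
  obtain ⟨v, hv, hv0⟩ := h
  exact Nat.sInf_mem (s := {w | ∃ v ∈ C, v ≠ 0 ∧ hammingNorm v = w}) ⟨_, v, hv, hv0, rfl⟩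

theorem exists_mem_prod_le_hammingNorm {A : Set (Fin m →₀ ℕ)} {v : (Fin m → F) → F}
    (hv : v ∈ monomialCode F m A) (hv0 : v ≠ 0) :
    ∃ e ∈ A, ∏ j, (Fintype.card F - e j) ≤ hammingNorm v := by
  obtain ⟨f, hfA, rfl⟩ := hv
  have hf : f ≠ 0 := by
    rintro rfl
    exact hv0 (funext fun P => by simp [evalPt])
  obtain ⟨e, he, hcard⟩ := exists_mem_support_prod_le_card_eval_ne_zero hf
  exact ⟨e, hfA he, hcard⟩

theorem exists_mem_monomialCode_hammingNorm_eq {A : Set (Fin m →₀ ℕ)} (hA : IsLowerSet A)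
    {i : Fin m →₀ ℕ} (hi : i ∈ A) (hiq : ∀ j, i j ≤ Fintype.card F) :
    ∃ v ∈ monomialCode F m A, hammingNorm v = ∏ j, (Fintype.card F - i j) := by
  obtain ⟨f, hfi, hf⟩ := exists_support_le_card_eval_ne_zero_eq (F := F) i hiq
  exact ⟨evalPt f, ⟨f, fun e he => hA (hfi e he) hi, rfl⟩, hf⟩

theorem minDist_monomialCode_le_prod {A : Set (Fin m →₀ ℕ)} (hA : IsLowerSet A)
    {i : Fin m →₀ ℕ} (hi : i ∈ A) (hiq : ∀ j, i j < Fintype.card F) :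
    minDist (monomialCode F m A) ≤ ∏ j, (Fintype.card F - i j) := by
  obtain ⟨v, hv, hwt⟩ := exists_mem_monomialCode_hammingNorm_eq hA hi fun j => (hiq j).le
  refine hwt ▸ minDist_le_hammingNorm hv (hammingNorm_pos_iff.1 ?_)
  exact hwt ▸ prod_pos fun j _ => Nat.sub_pos_of_lt (hiq j)

theorem exists_prod_le_minDist_monomialCode {A : Set (Fin m →₀ ℕ)} (hA : IsLowerSet A)
    (hne : A.Nonempty) :
    ∃ e ∈ A, ∏ j, (Fintype.card F - e j) ≤ minDist (monomialCode F m A) := by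
  obtain ⟨i, hi⟩ := hne
  obtain ⟨v, hv, hwt⟩ := exists_mem_monomialCode_hammingNorm_eq (F := F) hA
    (hA (show 0 ≤ i from zero_le) hi) fun j => by simp
  obtain ⟨w, hw, hw0, hwδ⟩ := exists_hammingNorm_eq_minDist
    ⟨v, hv, hammingNorm_pos_iff.1 (by simp [hwt, Fintype.card_pos])⟩
  exact hwδ ▸ exists_mem_prod_le_hammingNorm hw hw0

end MonomialCodes

section ReedMuller

variable {q m s t r : ℕ}

theorem mem_RMset_natCast {i : Fin m →₀ ℕ} :
    i ∈ RMset q m s ↔ (∀ j, i j < q) ∧ ∑ j, i j ≤ s := by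
  simp only [RMset, Set.mem_ofPred_eq]
  norm_cast

theorem isLowerSet_RMset {s : ℤ} : IsLowerSet (RMset q m s) :=
  fun i e hei ⟨hiq, his⟩ => ⟨fun j => (Finsupp.le_def.1 hei j).trans_lt (hiq j),
    (sum_le_sum fun j _ => by exact_mod_cast Finsupp.le_def.1 hei j).trans his⟩

theorem RMset_eq_Hypset_of_lt {δ : ℕ} (hstr : s + 1 = m * t + r) (hr : r < m)
    (hs : s < m * (q - 1)) (hδ : ∀ i ∈ RMset q m s, δ ≤ ∏ j, (q - i j))
    (hM : (q - t - 1) ^ r * (q - t) ^ (m - r) < δ) : RMset q m s = Hypset q m δ := by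
  ext i
  refine ⟨fun hi => ⟨(mem_RMset_natCast.1 hi).1, hδ i hi⟩, fun ⟨hiq, hiδ⟩ => ?_⟩
  refine mem_RMset_natCast.2 ⟨hiq, not_lt.1 fun hsum => hM.not_ge ?_⟩
  exact hiδ.trans (prod_sub_le_of_lt_sum hstr hr hs (fun j => (hiq j).le) hsum)

theorem prod_lt_of_RMset_eq_Hypset {d : ℕ} (hstr : s + 1 = m * t + r) (hr : r < m)
    (hs : s < m * (q - 1)) (h : RMset q m s = Hypset q m d) :
    (q - t - 1) ^ r * (q - t) ^ (m - r) < d := by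
  obtain ⟨i, hiq, hsum, hprod⟩ := exists_lt_sum_prod_sub_eq hstr hr hs
  have hi : Finsupp.equivFunOnFinite.symm i ∉ Hypset q m d := by
    rw [← h, mem_RMset_natCast]
    simpa using fun _ => hsum
  simpa [Hypset, hiq, hprod] using hi

end ReedMuller

theorem statement1_general (F : Type) [Field F] [Fintype F] [DecidableEq F]
    (q m s t r : ℕ) (hq : Fintype.card F = q) (hs : s < m * (q - 1))
    (hstr : s + 1 = m * t + r) (hr : r < m) :
    ((∃ d' : ℕ, 1 ≤ d' ∧
        monomialCode F m (RMset q m (s : ℤ)) = monomialCode F m (Hypset q m d')) ↔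
      (q - t - 1) ^ r * (q - t) ^ (m - r) <
        minDist (monomialCode F m (RMset q m (s : ℤ)))) ∧
    ((q - t - 1) ^ r * (q - t) ^ (m - r) <
        minDist (monomialCode F m (RMset q m (s : ℤ))) →
      monomialCode F m (RMset q m (s : ℤ)) =
        monomialCode F m (Hypset q m (minDist (monomialCode F m (RMset q m (s : ℤ)))))) := by
  subst hq
  obtain ⟨e, he, heδ⟩ := exists_prod_le_minDist_monomialCode (F := F) isLowerSet_RMset
    ⟨0, mem_RMset_natCast.2 ⟨fun _ => Fintype.card_pos (α := F), by simp⟩⟩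
  have hRM := RMset_eq_Hypset_of_lt hstr hr hs fun i hi =>
    minDist_monomialCode_le_prod isLowerSet_RMset hi (mem_RMset_natCast.1 hi).1
  refine ⟨⟨?_, fun h => ⟨_, ?_, congrArg _ (hRM h)⟩⟩, fun h => congrArg _ (hRM h)⟩
  · rintro ⟨d, -, hd⟩
    have hsets := eq_of_monomialCode_eq (fun i hi => (mem_RMset_natCast.1 hi).1)
      (fun i hi => hi.1) hd
    calc _ < d := prod_lt_of_RMset_eq_Hypset hstr hr hs hsets
      _ ≤ ∏ j, (Fintype.card F - e j) := (hsets ▸ he).2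
      _ ≤ _ := heδ
  · exact (prod_pos fun j _ => Nat.sub_pos_of_lt ((mem_RMset_natCast.1 he).1 j)).trans_le heδ

/-- `RM_q(s,m)` (with minimum distance `δ`) is a hyperbolic code iff
`(q-t-1)^r (q-t)^{m-r} < δ`, where `s+1 = mt + r`, `0 ≤ r < m`; and in that case
`RM_q(s,m) = Hyp_q(δ,m)`. -/
theorem statement1 (F : Type) [Field F] [Fintype F] [DecidableEq F]
    (q m s t r : ℕ) (hq : Fintype.card F = q) (hm : 1 ≤ m) (hs : s < m * (q - 1))
    (hstr : s + 1 = m * t + r) (hr : r < m) :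
    ((∃ d' : ℕ, 1 ≤ d' ∧
        monomialCode F m (RMset q m (s : ℤ)) = monomialCode F m (Hypset q m d')) ↔
      (q - t - 1) ^ r * (q - t) ^ (m - r) <
        minDist (monomialCode F m (RMset q m (s : ℤ)))) ∧
    ((q - t - 1) ^ r * (q - t) ^ (m - r) <
        minDist (monomialCode F m (RMset q m (s : ℤ))) →
      monomialCode F m (RMset q m (s : ℤ)) =
        monomialCode F m (Hypset q m (minDist (monomialCode F m (RMset q m (s : ℤ)))))) :=
  statement1_general F q m s t r hq hs hstr hr
end
end

section
/- Let d be an integer with 1 ≤ d ≤ q^2, let a = q - √d (a real number), and let s = ⌊2a⌋. Then Hyp_q(d,2) ⊆ RM_q(s,2), and s is the smallest integer with this property; that is, Hyp_q(d,2) ⊄ RM_q(s-1,2). -/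
open MvPolynomial Finset Pointwise

noncomputable section

/-- Number-theoretic helper: there exist `u v ∈ [1,q]` with `uv ≥ d` and `u+v-1 < 2√d`. -/
lemma exists_uv (q d : ℕ) (hd1 : 1 ≤ d) (hd2 : d ≤ q ^ 2) :
    ∃ u v : ℕ, 1 ≤ u ∧ 1 ≤ v ∧ u ≤ q ∧ v ≤ q ∧ d ≤ u * v ∧
      ((u : ℝ) + v - 1) < 2 * Real.sqrt d := by
  set k := Nat.sqrt d with hk
  have hk1 : 1 ≤ k := Nat.one_le_iff_ne_zero.mpr (by
    intro h; have := Nat.sqrt_eq_zero.mp (hk ▸ h); omega)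
  have hkk : k * k ≤ d := by have := Nat.sqrt_le' d; nlinarith
  have hdk : d < (k + 1) * (k + 1) := by have := Nat.lt_succ_sqrt' d; nlinarith [this]
  have hkq : k ≤ q := by
    by_contra h
    push_neg at h
    have : q * q < k * k := Nat.mul_lt_mul_of_lt_of_le h (le_of_lt h) (by omega)
    have : d ≤ q * q := by nlinarith
    omega
  have hsd : Real.sqrt d * Real.sqrt d = d := Real.mul_self_sqrt (by positivity)
  have hsd0 : (0:ℝ) ≤ Real.sqrt d := Real.sqrt_nonneg d
  -- helper to derive the real inequality from a squared one
  have key : ∀ N : ℕ, (N : ℝ) ^ 2 < 4 * d → (N : ℝ) < 2 * Real.sqrt d := by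
    intro N h
    nlinarith [hsd, hsd0, Nat.cast_nonneg (α := ℝ) N]
  rcases Nat.lt_or_ge (k * k) d with hlt | hge
  · -- d > k², so k+1 ≤ q
    have hk1q : k + 1 ≤ q := by
      by_contra h
      push_neg at h
      have hq : q ≤ k := by omega
      have : q * q ≤ k * k := Nat.mul_le_mul hq hq
      have : d ≤ k * k := by nlinarith
      omega
    rcases le_or_gt d (k * k + k) with hle | hgt
    · refine ⟨k, k + 1, hk1, by omega, hkq, hk1q, by push_cast; nlinarith, ?_⟩
      have hltR : (k:ℝ) * k < d := by exact_mod_cast hlt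
      have : ((2 * k : ℕ) : ℝ) ^ 2 < 4 * d := by push_cast; nlinarith
      have := key (2 * k) this
      push_cast at this ⊢
      linarith
    · refine ⟨k + 1, k + 1, by omega, by omega, hk1q, hk1q, by push_cast; nlinarith, ?_⟩
      have hgt' : k * k + k + 1 ≤ d := hgt
      have hgtR : (k:ℝ) * k + k + 1 ≤ d := by exact_mod_cast hgt'
      have : ((2 * k + 1 : ℕ) : ℝ) ^ 2 < 4 * d := by push_cast; nlinarith
      have := key (2 * k + 1) this
      push_cast at this ⊢
      linarith
  · -- d = k²
    have hdk2 : d = k * k := le_antisymm hge hkk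
    refine ⟨k, k, hk1, hk1, hkq, hkq, by omega, ?_⟩
    have : ((2 * k - 1 : ℕ) : ℝ) ^ 2 < 4 * d := by
      have h1 : 2 * k - 1 + 1 = 2 * k := by omega
      have : ((2 * k - 1 : ℕ) : ℝ) = 2 * k - 1 := by
        push_cast [Nat.cast_sub (by omega : 1 ≤ 2 * k)]; ring
      rw [this]
      have hk1' : (1:ℝ) ≤ (k:ℝ) := by exact_mod_cast hk1
      have hdR : (d:ℝ) = (k:ℝ) * k := by exact_mod_cast hdk2
      push_cast
      nlinarith
    have := key (2 * k - 1) this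
    have h2 : ((2 * k - 1 : ℕ) : ℝ) = 2 * (k:ℝ) - 1 := by
      push_cast [Nat.cast_sub (by omega : 1 ≤ 2 * k)]; ring
    rw [h2] at this
    push_cast
    linarith

/-- A polynomial with all exponents `< q = |F|` whose evaluation vanishes everywhere is `0`. -/
lemma eval_injective_aux {F : Type} [Field F] [Fintype F] {q : ℕ}
    (hq : Fintype.card F = q) (f : MvPolynomial (Fin 2) F)
    (hsupp : ∀ i ∈ f.support, ∀ j, i j < q)
    (hzero : ∀ P : Fin 2 → F, MvPolynomial.eval P f = 0) : f = 0 := by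
  apply MvPolynomial.eq_zero_of_eval_eq_zero (K := F) (σ := Fin 2) f hzero
  rw [MvPolynomial.mem_restrictDegree]
  intro i hi j
  have := hsupp i hi j
  have hq1 : 1 ≤ q := hq ▸ Fintype.card_pos
  omega

/-- with `a = q - √d` and `s = ⌊2a⌋`, `Hyp_q(d,2) ⊆ RM_q(s,2)` and `s`
is the smallest integer with this property. -/
theorem statement3 (F : Type) [Field F] [Fintype F] [DecidableEq F]
    (q d : ℕ) (hq : Fintype.card F = q) (hd1 : 1 ≤ d) (hd2 : d ≤ q ^ 2)
    (a : ℝ) (ha : a = (q : ℝ) - Real.sqrt d) (s : ℤ) (hs : s = ⌊2 * a⌋) :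
    monomialCode F 2 (Hypset q 2 d) ⊆ monomialCode F 2 (RMset q 2 s) ∧
      ¬ monomialCode F 2 (Hypset q 2 d) ⊆ monomialCode F 2 (RMset q 2 (s - 1)) := by
  have hq2 : 2 ≤ q := hq ▸ Fintype.one_lt_card
  have hsd0 : (0:ℝ) ≤ Real.sqrt d := Real.sqrt_nonneg d
  have hsd : Real.sqrt d * Real.sqrt d = d := Real.mul_self_sqrt (by positivity)
  constructor
  · -- inclusion: Hypset ⊆ RMset s
    rintro v ⟨f, hf, rfl⟩
    refine ⟨f, ?_, rfl⟩
    refine hf.trans ?_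
    rintro i ⟨hiq, hid⟩
    refine ⟨hiq, ?_⟩
    rw [hs, Int.le_floor]
    rw [Fin.prod_univ_two] at hid
    set u := q - i 0 with hu
    set v' := q - i 1 with hv
    have hu1 : 1 ≤ u := by have := hiq 0; omega
    have hv1 : 1 ≤ v' := by have := hiq 1; omega
    have huv : (d : ℝ) ≤ (u : ℝ) * v' := by exact_mod_cast hid
    -- AM-GM: 2√d ≤ 2√(uv) ≤ u + v
    have h1 : Real.sqrt d ≤ Real.sqrt ((u : ℝ) * v') := Real.sqrt_le_sqrt huv
    have h2 : 2 * Real.sqrt ((u : ℝ) * v') ≤ (u : ℝ) + v' := by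
      have hs2 : Real.sqrt ((u:ℝ) * v') * Real.sqrt ((u:ℝ) * v') = (u:ℝ) * v' :=
        Real.mul_self_sqrt (by positivity)
      nlinarith [Real.sqrt_nonneg ((u:ℝ) * v'), sq_nonneg ((u:ℝ) - v'),
        sq_nonneg (Real.sqrt ((u:ℝ) * v') * 2 - ((u:ℝ) + v'))]
    have hucast : (u : ℝ) = (q : ℝ) - i 0 := by
      rw [hu, Nat.cast_sub (le_of_lt (hiq 0))]
    have hvcast : (v' : ℝ) = (q : ℝ) - i 1 := by
      rw [hv, Nat.cast_sub (le_of_lt (hiq 1))]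
    rw [Fin.sum_univ_two]
    push_cast
    rw [ha]
    rw [hucast, hvcast] at h1 h2
    linarith
  · -- non-inclusion
    obtain ⟨u, v, hu1, hv1, huq, hvq, huvd, huvs⟩ := exists_uv q d hd1 hd2
    set c : Fin 2 →₀ ℕ := Finsupp.equivFunOnFinite.symm ![q - u, q - v] with hc
    have hc0 : c 0 = q - u := rfl
    have hc1 : c 1 = q - v := rfl
    have hcmem : c ∈ Hypset q 2 d := by
      refine ⟨fun j => ?_, ?_⟩
      · fin_cases j <;> simp [hc0, hc1] <;> omega
      · rw [Fin.prod_univ_two, hc0, hc1]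
        have e0 : q - (q - u) = u := by omega
        have e1 : q - (q - v) = v := by omega
        rw [e0, e1]; exact huvd
    intro hsub
    have hmem : evalPt (MvPolynomial.monomial c (1 : F)) ∈
        monomialCode F 2 (Hypset q 2 d) := by
      refine ⟨_, ?_, rfl⟩
      rw [MvPolynomial.support_monomial]
      simp [hcmem]
    obtain ⟨g, hg, heq⟩ := hsub hmem
    have hdiff : MvPolynomial.monomial c (1 : F) - g = 0 := by
      apply eval_injective_aux hq
      · intro i hi j
        have := MvPolynomial.support_sub (Fin 2) (MvPolynomial.monomial c (1 : F)) g hi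
        rw [Finset.mem_union] at this
        rcases this with h | h
        · rw [MvPolynomial.support_monomial, if_neg one_ne_zero] at h
          simp only [Finset.mem_singleton] at h
          subst h
          fin_cases j <;> simp [hc0, hc1] <;> omega
        · exact (hg h).1 j
      · intro P
        have := congrFun heq P
        simp only [evalPt] at this
        simp [this]
    have hgm : g = MvPolynomial.monomial c (1 : F) := by
      have := sub_eq_zero.mp hdiff
      exact this.symm
    have hcg : c ∈ g.support := by
      rw [hgm, MvPolynomial.support_monomial, if_neg one_ne_zero]
      exact Finset.mem_singleton_self c
    have hcR := hg hcg
    have hsum : (∑ j, (c j : ℤ)) ≤ s - 1 := hcR.2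
    rw [Fin.sum_univ_two, hc0, hc1] at hsum
    -- but (q-u)+(q-v) ≥ s
    have hfl : s ≤ 2 * (q : ℤ) - u - v := by
      rw [hs, Int.floor_le_iff]
      rw [ha]
      push_cast
      linarith
    have hcast0 : ((q - u : ℕ) : ℤ) = (q : ℤ) - u := by
      rw [Nat.cast_sub huq]
    have hcast1 : ((q - v : ℕ) : ℤ) = (q : ℤ) - v := by
      rw [Nat.cast_sub hvq]
    rw [hcast0, hcast1] at hsum
    omega
end
end

section
/- Let m ≥ 1 and let d be an integer with 1 ≤ d ≤ q^m. Set a = q - d^{1/m} (a real number) and s = ⌊ma⌋. Then Hyp_q(d,m) ⊆ RM_q(s,m). Moreover, if the fractional part {a} satisfies {a} < 1/m, then s is the smallest integer with this property, i.e. Hyp_q(d,m) ⊄ RM_q(s-1,m). -/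
open MvPolynomial Finset Pointwise

noncomputable section

-- key nonvanishing
lemma key_nonvanish {F : Type} [Field F] [Fintype F] {m : ℕ}
    (p : MvPolynomial (Fin m) F) (hp : p ≠ 0)
    (hdeg : ∀ i ∈ p.support, ∀ j, i j < Fintype.card F) :
    ∃ v : Fin m → F, MvPolynomial.eval v p ≠ 0 := by
  by_contra h
  push_neg at h
  apply hp
  apply MvPolynomial.eq_zero_of_eval_eq_zero (Fin m) F p h
  rw [MvPolynomial.mem_restrictDegree]
  intro i hi j
  exact Nat.le_sub_one_of_lt (hdeg i hi j)

-- Part 1 arithmetic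
lemma part1_arith (q m d : ℕ) (hm : 1 ≤ m) (i : Fin m → ℕ) (hlt : ∀ j, i j < q)
    (hprod : d ≤ ∏ j, (q - i j)) :
    (∑ j, (i j : ℝ)) ≤ (m : ℝ) * ((q : ℝ) - (d : ℝ) ^ ((1 : ℝ) / m)) := by
  have hm0 : (m : ℝ) ≠ 0 := Nat.cast_ne_zero.mpr (by omega)
  set z : Fin m → ℝ := fun j => ((q - i j : ℕ) : ℝ) with hz
  have hznn : ∀ j ∈ Finset.univ, (0:ℝ) ≤ z j := fun j _ => Nat.cast_nonneg _
  have h1 : (d : ℝ) ≤ ∏ j, z j := by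
    rw [hz, ← Nat.cast_prod]; exact_mod_cast hprod
  have h2 : (d : ℝ) ^ ((1:ℝ)/m) ≤ (∏ j, z j) ^ ((1:ℝ)/m) :=
    Real.rpow_le_rpow (Nat.cast_nonneg _) h1 (by positivity)
  have h3 : (∏ j, z j) ^ ((1:ℝ)/m) = ∏ j, (z j) ^ ((1:ℝ)/m) :=
    (Real.finset_prod_rpow Finset.univ z hznn _).symm
  have h4 : ∏ j, (z j) ^ ((1:ℝ)/m) ≤ ∑ j, ((1:ℝ)/m) * z j := by
    apply Real.geom_mean_le_arith_mean_weighted Finset.univ (fun _ => (1:ℝ)/m) z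
      (fun _ _ => by positivity) ?_ hznn
    rw [Finset.sum_const, Finset.card_univ, Fintype.card_fin, nsmul_eq_mul]
    field_simp
  have h5 : ∑ j, ((1:ℝ)/m) * z j = (1/m) * ∑ j, z j := by rw [Finset.mul_sum]
  have h6 : (m:ℝ) * ((d : ℝ) ^ ((1:ℝ)/m)) ≤ ∑ j, z j := by
    have := (h2.trans_eq h3).trans h4
    rw [h5] at this
    have hmpos : (0:ℝ) < (m:ℝ) := by positivity
    have h6' := mul_le_mul_of_nonneg_left this hmpos.le
    rw [← mul_assoc, mul_one_div_cancel hm0, one_mul] at h6'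
    exact h6'
  have h7 : ∑ j, z j = (m:ℝ) * q - ∑ j, (i j : ℝ) := by
    have : ∀ j, z j = (q:ℝ) - (i j : ℝ) := fun j => by
      rw [hz]; push_cast [Nat.cast_sub (le_of_lt (hlt j))]; ring
    simp only [this, Finset.sum_sub_distrib, Finset.sum_const, Finset.card_univ,
      Fintype.card_fin, nsmul_eq_mul]
  rw [h7] at h6
  nlinarith [h6]

-- Part 2 arithmetic
lemma part2_arith (q m d : ℕ) (hm : 1 ≤ m) (hq : 1 ≤ q) (hd1 : 1 ≤ d) (hd2 : d ≤ q ^ m)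
    (a : ℝ) (ha : a = (q : ℝ) - (d : ℝ) ^ ((1 : ℝ) / m)) (hfr : Int.fract a < 1 / (m : ℝ)) :
    0 ≤ ⌊a⌋ ∧ ⌊a⌋.toNat < q ∧ d ≤ (q - ⌊a⌋.toNat) ^ m ∧ ⌊(m : ℝ) * a⌋ = m * ⌊a⌋ := by
  have hm0 : (m : ℝ) ≠ 0 := Nat.cast_ne_zero.mpr (by omega)
  have hmpos : (0:ℝ) < (m:ℝ) := by positivity
  have hd1r : (1:ℝ) ≤ (d:ℝ) ^ ((1:ℝ)/m) := by
    have h := Real.rpow_le_rpow (by norm_num) (show (1:ℝ) ≤ (d:ℝ) by exact_mod_cast hd1)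
      (by positivity : (0:ℝ) ≤ (1:ℝ)/m)
    rwa [Real.one_rpow] at h
  have hup : (d:ℝ) ^ ((1:ℝ)/m) ≤ (q:ℝ) := by
    have h := Real.rpow_le_rpow (Nat.cast_nonneg d)
      (show (d:ℝ) ≤ (q:ℝ)^(m:ℕ) by exact_mod_cast hd2) (by positivity : (0:ℝ) ≤ (1:ℝ)/m)
    rwa [← Real.rpow_natCast (q:ℝ) m, ← Real.rpow_mul (Nat.cast_nonneg q),
      mul_one_div_cancel hm0, Real.rpow_one] at h
  have ha0 : 0 ≤ a := by rw [ha]; linarith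
  have hfl0 : 0 ≤ ⌊a⌋ := Int.floor_nonneg.mpr ha0
  have haq : a < (q:ℝ) := by rw [ha]; linarith
  have hflq : ⌊a⌋ < (q:ℤ) := by
    have : (⌊a⌋:ℝ) < (q:ℝ) := lt_of_le_of_lt (Int.floor_le a) haq
    exact_mod_cast this
  have htq : ⌊a⌋.toNat < q := by omega
  refine ⟨hfl0, htq, ?_, ?_⟩
  · -- d ≤ (q - t)^m
    have htcast : ((⌊a⌋.toNat : ℕ) : ℝ) = (⌊a⌋ : ℝ) := by
      exact_mod_cast congrArg Int.cast (Int.toNat_of_nonneg hfl0)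
    have hzt : (d:ℝ) ^ ((1:ℝ)/m) ≤ (q:ℝ) - (⌊a⌋.toNat : ℕ) := by
      rw [htcast]
      have h2 : (⌊a⌋:ℝ) ≤ (q:ℝ) - (d:ℝ) ^ ((1:ℝ)/m) := by rw [← ha]; exact Int.floor_le a
      linarith
    have hpow : (d:ℝ) ≤ ((q:ℝ) - (⌊a⌋.toNat : ℕ)) ^ (m:ℕ) := by
      calc (d:ℝ) = ((d:ℝ) ^ ((1:ℝ)/m)) ^ (m:ℕ) := by
            rw [← Real.rpow_natCast ((d:ℝ) ^ ((1:ℝ)/m)) m, ← Real.rpow_mul (Nat.cast_nonneg d),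
              one_div_mul_cancel hm0, Real.rpow_one]
        _ ≤ _ := pow_le_pow_left₀ (by positivity) hzt m
    have hcast2 : (((q - ⌊a⌋.toNat) : ℕ) : ℝ) = (q:ℝ) - (⌊a⌋.toNat : ℕ) := by
      push_cast [Nat.cast_sub (le_of_lt htq)]; ring
    have : (d:ℝ) ≤ (((q - ⌊a⌋.toNat)^m : ℕ) : ℝ) := by
      rw [Nat.cast_pow, hcast2]; exact hpow
    exact_mod_cast this
  · -- floor identity
    have hfr1 : (m:ℝ) * Int.fract a < 1 := by
      have := mul_lt_mul_of_pos_left hfr hmpos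
      rwa [mul_one_div_cancel hm0] at this
    have hfr0 : 0 ≤ (m:ℝ) * Int.fract a := mul_nonneg hmpos.le (Int.fract_nonneg a)
    have hsplit : (m:ℝ) * a = (m:ℝ) * (⌊a⌋:ℝ) + (m:ℝ) * Int.fract a := by
      rw [← mul_add, Int.floor_add_fract]
    rw [Int.floor_eq_iff]
    constructor
    · push_cast; rw [hsplit]; linarith
    · push_cast; rw [hsplit]; linarith

/-- with `a = q - d^{1/m}` and `s = ⌊ma⌋`, `Hyp_q(d,m) ⊆ RM_q(s,m)`;
moreover if the fractional part of `a` is `< 1/m` then `s` is smallest with this property. -/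
theorem statement4 (F : Type) [Field F] [Fintype F] [DecidableEq F]
    (q m d : ℕ) (hq : Fintype.card F = q) (hm : 1 ≤ m) (hd1 : 1 ≤ d) (hd2 : d ≤ q ^ m)
    (a : ℝ) (ha : a = (q : ℝ) - (d : ℝ) ^ ((1 : ℝ) / m)) (s : ℤ) (hs : s = ⌊(m : ℝ) * a⌋) :
    monomialCode F m (Hypset q m d) ⊆ monomialCode F m (RMset q m s) ∧
      (Int.fract a < 1 / (m : ℝ) →
        ¬ monomialCode F m (Hypset q m d) ⊆ monomialCode F m (RMset q m (s - 1))) := by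
  constructor
  · -- inclusion Hyp ⊆ RM
    rintro v ⟨f, hf, rfl⟩
    refine ⟨f, ?_, rfl⟩
    intro i hi
    obtain ⟨h1, h2⟩ := hf hi
    refine ⟨h1, ?_⟩
    rw [hs, Int.le_floor, ha]
    push_cast
    exact part1_arith q m d hm (fun j => i j) h1 h2
  · -- minimality
    intro hfr hsub
    have hq1 : 1 ≤ q := hq ▸ Fintype.card_pos
    obtain ⟨hfl0, htq, hdle, hfloor⟩ := part2_arith q m d hm hq1 hd1 hd2 a ha hfr
    set t := ⌊a⌋.toNat with ht
    set i' : Fin m →₀ ℕ := Finsupp.equivFunOnFinite.symm (fun _ => t) with hi'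
    have hi'app : ∀ j, i' j = t := fun j => rfl
    have hsum : ∑ j, (i' j : ℤ) = s := by
      simp only [hi'app]
      rw [Finset.sum_const, Finset.card_univ, Fintype.card_fin, nsmul_eq_mul,
        Int.toNat_of_nonneg hfl0, hs, hfloor]
    have hmem : evalPt (MvPolynomial.monomial i' (1 : F)) ∈ monomialCode F m (Hypset q m d) := by
      refine ⟨MvPolynomial.monomial i' 1, ?_, rfl⟩
      rw [MvPolynomial.support_monomial, if_neg one_ne_zero, Finset.coe_singleton,
        Set.singleton_subset_iff]
      refine ⟨fun j => by rw [hi'app]; exact htq, ?_⟩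
      simp only [hi'app]
      rw [Finset.prod_const, Finset.card_univ, Fintype.card_fin]
      exact hdle
    obtain ⟨g, hg, heq⟩ := hsub hmem
    have hcoeffg : MvPolynomial.coeff i' g = 0 := by
      by_contra hc
      have hmemg : i' ∈ g.support := MvPolynomial.mem_support_iff.mpr hc
      have := (hg hmemg).2
      rw [hsum] at this
      omega
    set p := MvPolynomial.monomial i' (1 : F) - g with hp
    have hpne : p ≠ 0 := by
      intro h0
      have : MvPolynomial.coeff i' p = 1 := by
        rw [hp, MvPolynomial.coeff_sub, hcoeffg, MvPolynomial.coeff_monomial, if_pos rfl,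
          sub_zero]
      rw [h0] at this
      simp at this
    have hdeg : ∀ i ∈ p.support, ∀ j, i j < Fintype.card F := by
      intro i hi j
      rw [hq]
      have := MvPolynomial.support_sub (Fin m) (MvPolynomial.monomial i' (1 : F)) g hi
      rw [Finset.mem_union] at this
      rcases this with h | h
      · rw [MvPolynomial.support_monomial, if_neg one_ne_zero, Finset.mem_singleton] at h
        subst h
        rw [hi'app]
        exact htq
      · exact (hg h).1 j
    obtain ⟨v, hv⟩ := key_nonvanish p hpne hdeg
    apply hv
    rw [hp, map_sub]
    have := congrFun heq v
    simp only [evalPt] at this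
    rw [this, sub_self]
end
end

section
/- Let m ≥ 1 and let d be an integer with 1 ≤ d ≤ (q-1)^m, and set a = q - d^{1/m} (a real number). Then Hyp_q(d,m) is not contained in RM_q(m⌊a⌋ - 1, m). -/
open MvPolynomial Finset Pointwise

noncomputable section

/-- with `a = q - d^{1/m}`, `Hyp_q(d,m)` is not contained in
`RM_q(m⌊a⌋ - 1, m)`. -/
theorem statement5 (F : Type) [Field F] [Fintype F] [DecidableEq F]
    (q m d : ℕ) (hq : Fintype.card F = q) (hm : 1 ≤ m) (hd1 : 1 ≤ d) (hd2 : d ≤ (q - 1) ^ m)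
    (a : ℝ) (ha : a = (q : ℝ) - (d : ℝ) ^ ((1 : ℝ) / m)) :
    ¬ monomialCode F m (Hypset q m d) ⊆
        monomialCode F m (RMset q m ((m : ℤ) * ⌊a⌋ - 1)) := by
  -- basic facts
  have hq2 : 2 ≤ q := by
    by_contra h
    push_neg at h
    have h1 : q - 1 = 0 := by omega
    rw [h1, zero_pow (by omega : m ≠ 0)] at hd2
    omega
  have hm0 : (m : ℝ) ≠ 0 := by positivity
  set r : ℝ := (d : ℝ) ^ ((1 : ℝ) / m) with hr
  have hr1 : 1 ≤ r := Real.one_le_rpow (by exact_mod_cast hd1) (by positivity)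
  have hrq : r ≤ (q : ℝ) - 1 := by
    have h1 : r ≤ ((((q - 1) ^ m : ℕ) : ℝ)) ^ ((1 : ℝ) / m) :=
      Real.rpow_le_rpow (by positivity) (by exact_mod_cast hd2) (by positivity)
    have h2 : (((q - 1) ^ m : ℕ) : ℝ) = ((q : ℝ) - 1) ^ (m : ℕ) := by
      push_cast [Nat.cast_sub (by omega : 1 ≤ q)]; ring
    have h3 : (((q : ℝ) - 1) ^ (m : ℕ)) ^ ((1 : ℝ) / m) = (q : ℝ) - 1 := by
      rw [← Real.rpow_natCast ((q : ℝ) - 1) m, ← Real.rpow_mul (by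
        have : (1 : ℝ) ≤ q := by exact_mod_cast (by omega : 1 ≤ q)
        linarith)]
      rw [mul_one_div, div_self hm0, Real.rpow_one]
    rw [h2, h3] at h1
    exact h1
  have ha0 : 0 ≤ a := by rw [ha]; linarith
  have haq : a ≤ (q : ℝ) - 1 := by rw [ha]; linarith
  -- the witness exponent
  set b : ℕ := ⌊a⌋.toNat with hb
  have hbZ : (b : ℤ) = ⌊a⌋ := Int.toNat_of_nonneg (Int.floor_nonneg.2 ha0)
  have hbR : (b : ℝ) ≤ a := by
    have := Int.floor_le a
    rw [← hbZ] at this; exact_mod_cast this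
  have hbq : b ≤ q - 1 := by
    have : (b : ℝ) ≤ (q : ℝ) - 1 := le_trans hbR haq
    have hq1 : ((q - 1 : ℕ) : ℝ) = (q : ℝ) - 1 := by
      push_cast [Nat.cast_sub (by omega : 1 ≤ q)]; ring
    rw [← hq1] at this
    exact_mod_cast this
  have hbltq : b < q := by omega
  -- the witness polynomial
  set i0 : Fin m →₀ ℕ := Finsupp.equivFunOnFinite.symm (fun _ => b) with hi0
  have hi0app : ∀ j, i0 j = b := fun j => rfl
  have hi0Hyp : i0 ∈ Hypset q m d := by
    refine ⟨fun j => by rw [hi0app]; exact hbltq, ?_⟩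
    have hkey : (d : ℝ) ≤ (((q - b : ℕ)) : ℝ) ^ (m : ℕ) := by
      have h1 : r ≤ ((q - b : ℕ) : ℝ) := by
        have : (((q - b : ℕ)) : ℝ) = (q : ℝ) - b := by
          push_cast [Nat.cast_sub (le_of_lt hbltq)]; ring
        rw [this, ha] at *
        linarith [hbR]
      have h2 : (d : ℝ) = r ^ (m : ℕ) := by
        rw [hr, ← Real.rpow_natCast ((d:ℝ) ^ ((1:ℝ)/m)) m, ← Real.rpow_mul (by positivity)]
        rw [one_div, inv_mul_cancel₀ hm0, Real.rpow_one]
      rw [h2]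
      exact pow_le_pow_left₀ (by linarith) h1 m
    have : d ≤ (q - b) ^ m := by exact_mod_cast hkey
    calc d ≤ (q - b) ^ m := this
      _ = ∏ j : Fin m, (q - i0 j) := by
          rw [Finset.prod_congr rfl fun j _ => by rw [hi0app], Finset.prod_const,
            Finset.card_univ, Fintype.card_fin]
  intro hsub
  have hvHyp : evalPt (MvPolynomial.monomial i0 (1 : F)) ∈ monomialCode F m (Hypset q m d) := by
    refine ⟨MvPolynomial.monomial i0 (1 : F), ?_, rfl⟩
    rw [MvPolynomial.support_monomial]
    simp only [if_neg (one_ne_zero (α := F))]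
    intro x hx
    simp only [Finset.coe_singleton, Set.mem_singleton_iff] at hx
    rwa [hx]
  obtain ⟨g, hgsup, hgev⟩ := hsub hvHyp
  -- i0 is not in RMset
  have hi0RM : i0 ∉ RMset q m ((m : ℤ) * ⌊a⌋ - 1) := by
    intro ⟨_, hsum⟩
    have : (∑ j : Fin m, ((i0 j : ℤ))) = (m : ℤ) * ⌊a⌋ := by
      rw [Finset.sum_congr rfl fun j _ => by rw [hi0app], Finset.sum_const,
        Finset.card_univ, Fintype.card_fin, nsmul_eq_mul, hbZ]
    omega
  -- the difference polynomial is zero by evaluation injectivity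
  set p : MvPolynomial (Fin m) F := MvPolynomial.monomial i0 (1 : F) - g with hp
  have hpz : p = 0 := by
    apply MvPolynomial.eq_zero_of_eval_eq_zero
    · intro v
      have := congrFun hgev v
      simp only [evalPt] at this
      simp [hp, this]
    · rw [MvPolynomial.mem_restrictDegree]
      intro s hs j
      have hs' := MvPolynomial.support_sub _ _ _ hs
      rw [Finset.mem_union] at hs'
      rcases hs' with h | h
      · rw [MvPolynomial.support_monomial, if_neg (one_ne_zero (α := F))] at h
        rw [Finset.mem_singleton] at h
        subst h
        rw [hi0app]
        omega
      · have := (hgsup h).1 j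
        omega
  have : MvPolynomial.coeff i0 p = 1 := by
    have hgc : MvPolynomial.coeff i0 g = 0 := by
      by_contra hc
      exact hi0RM (hgsup (MvPolynomial.mem_support_iff.2 hc))
    simp [hp, MvPolynomial.coeff_monomial, hgc]
  rw [hpz] at this
  simp at this
end
end

section
/- Let d be an integer with 1 ≤ d ≤ q^2, and let s be the smallest integer such that Hyp_q(d,2) ⊆ RM_q(s,2). Let H ⊆ {0,…,q-1}^2 be the exponent set defining Hyp_q(d,2) and R ⊆ {0,…,q-1}^2 the exponent set defining RM_q(s-1,2). Then the cardinality of the set difference H \ R satisfies |H \ R| ≤ 2(d^{1/4} + 1). -/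
open MvPolynomial Finset Pointwise

noncomputable section

/-- If the monomial code of `A` is contained in that of `B`, and both exponent sets are
reduced (all exponents `< |F|`), then `A ⊆ B`. -/
lemma code_sub {F : Type} [Field F] [Fintype F] {A B : Set (Fin 2 →₀ ℕ)}
    (hA : ∀ i ∈ A, ∀ j, i j < Fintype.card F)
    (hB : ∀ i ∈ B, ∀ j, i j < Fintype.card F)
    (h : monomialCode F 2 A ⊆ monomialCode F 2 B) : A ⊆ B := by
  intro i hi
  have hmem : evalPt (monomial i (1:F)) ∈ monomialCode F 2 A := by
    refine ⟨monomial i 1, ?_, rfl⟩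
    classical
    simp [MvPolynomial.support_monomial, Set.singleton_subset_iff, hi]
  obtain ⟨g, hg, hev⟩ := h hmem
  have hzero : ∀ v : Fin 2 → F, eval v (monomial i (1:F) - g) = 0 := by
    intro v
    have hv := congrFun hev v
    simp only [evalPt] at hv
    rw [map_sub, ← hv, sub_self]
  have hcard : 1 ≤ Fintype.card F := Fintype.card_pos
  have hdeg : monomial i (1:F) - g ∈
      MvPolynomial.restrictDegree (Fin 2) F (Fintype.card F - 1) := by
    rw [MvPolynomial.mem_restrictDegree]
    intro a ha j
    classical
    have hmem2 := MvPolynomial.support_sub (σ := Fin 2) (monomial i (1:F)) g ha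
    rcases Finset.mem_union.mp hmem2 with h1 | h2
    · have hai : a = i := by
        simpa [MvPolynomial.support_monomial] using h1
      rw [hai]
      have := hA i hi j
      omega
    · have := hB a (hg h2) j
      omega
  have h0 : monomial i (1:F) - g = 0 :=
    MvPolynomial.eq_zero_of_eval_eq_zero (K := F) (σ := Fin 2) _ hzero hdeg
  have hgi : monomial i (1:F) = g := by
    rwa [sub_eq_zero] at h0
  apply hg
  rw [Finset.mem_coe, MvPolynomial.mem_support_iff, ← hgi]
  simp

/-- `t² + 1 = (t-1)² + 2t` for `t ≥ 2` (indeed `t ≥ 1`). -/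
lemma sq_pred_aux (t : ℕ) (h : 2 ≤ t) : t*t + 1 = (t-1)*(t-1) + 2*t := by
  obtain ⟨u, rfl⟩ : ∃ u, t = u + 2 := ⟨t - 2, by omega⟩
  have hu : u + 2 - 1 = u + 1 := by omega
  rw [hu]; ring

/-- `4ab ≤ (a+b)²` over the naturals. -/
lemma four_mul_le_sq (a b : ℕ) : 4 * (a * b) ≤ (a + b) * (a + b) := by
  nlinarith [Nat.zero_le ((a - b) * (a - b)), sq_nonneg ((a : ℤ) - b)]

/-- A finitely supported function on `Fin 2` with the two given values. -/
def fs2 (x y : ℕ) : Fin 2 →₀ ℕ := Finsupp.equivFunOnFinite.symm ![x, y]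

lemma fs2_apply (x y : ℕ) (j : Fin 2) : fs2 x y j = ![x, y] j := by
  simp [fs2]

lemma fs2_0 (x y : ℕ) : fs2 x y 0 = x := by rw [fs2_apply]; rfl

lemma fs2_1 (x y : ℕ) : fs2 x y 1 = y := by rw [fs2_apply]; rfl

set_option maxHeartbeats 1000000 in
/-- if `s` is the smallest integer with `Hyp_q(d,2) ⊆ RM_q(s,2)`, then the
exponent sets satisfy `|H \ R| ≤ 2(d^{1/4} + 1)` where `R` defines `RM_q(s-1,2)`. -/
theorem statement10 (F : Type) [Field F] [Fintype F] [DecidableEq F]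
    (q d : ℕ) (hq : Fintype.card F = q) (hd1 : 1 ≤ d) (hd2 : d ≤ q ^ 2) (s : ℤ)
    (hs1 : monomialCode F 2 (Hypset q 2 d) ⊆ monomialCode F 2 (RMset q 2 s))
    (hs2 : ∀ s' : ℤ,
      monomialCode F 2 (Hypset q 2 d) ⊆ monomialCode F 2 (RMset q 2 s') → s ≤ s') :
    ((Hypset q 2 d \ RMset q 2 (s - 1)).ncard : ℝ) ≤ 2 * ((d : ℝ) ^ ((1 : ℝ) / 4) + 1) := by
  classical
  have hq2 : 2 ≤ q := by
    rw [← hq]; exact Fintype.one_lt_card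
  set x : ℝ := (d : ℝ) ^ ((1:ℝ)/4) with hxdef
  have hx0 : 0 ≤ x := Real.rpow_nonneg (by positivity) _
  have hx4 : x ^ 4 = (d : ℝ) := by
    rw [hxdef, ← Real.rpow_natCast ((d:ℝ) ^ ((1:ℝ)/4)) 4,
      ← Real.rpow_mul (by positivity : (0:ℝ) ≤ (d:ℝ))]
    norm_num
  have hx1 : (1:ℝ) ≤ x := by
    rw [hxdef]
    exact Real.one_le_rpow (by exact_mod_cast hd1) (by norm_num)
  have hsub : Hypset q 2 d ⊆ RMset q 2 s := by
    refine code_sub ?_ ?_ hs1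
    · intro i hiH j; rw [hq]; exact hiH.1 j
    · intro i hiR j; rw [hq]; exact hiR.1 j
  rcases Set.eq_empty_or_nonempty (Hypset q 2 d \ RMset q 2 (s-1)) with hS | ⟨w, hw⟩
  · rw [hS]
    simp only [Set.ncard_empty, Nat.cast_zero]
    positivity
  obtain ⟨hwH, hwR⟩ := hw
  have hwprod : d ≤ (q - w 0) * (q - w 1) := by
    have := hwH.2
    rwa [Fin.prod_univ_two] at this
  have hw0 : w 0 < q := hwH.1 0
  have hw1 : w 1 < q := hwH.1 1
  have hwsum : (w 0 : ℤ) + (w 1 : ℤ) ≤ s := by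
    have := (hsub hwH).2
    rwa [Fin.sum_univ_two] at this
  have hwsum2 : s ≤ (w 0 : ℤ) + (w 1 : ℤ) := by
    by_contra hcon
    push_neg at hcon
    exact hwR ⟨hwH.1, by rw [Fin.sum_univ_two]; omega⟩
  set sn : ℕ := w 0 + w 1 with hsndef
  have hsnZ : (sn : ℤ) = s := by push_cast; omega
  set t : ℕ := 2*q - sn with htdef
  have hsn2q : sn + 2 ≤ 2*q := by omega
  have ht2 : 2 ≤ t := by omega
  have htq : t ≤ 2*q := by omega
  have hab : t = (q - w 0) + (q - w 1) := by omega
  have h4dt : 4*d ≤ t*t := by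
    calc 4*d ≤ 4*((q - w 0)*(q - w 1)) := by omega
      _ ≤ ((q - w 0)+(q - w 1))*((q - w 0)+(q - w 1)) := four_mul_le_sq _ _
      _ = t*t := by rw [← hab]
  -- the key minimality estimate `(t-1)² ≤ 4d`
  have hkey : (t-1)*(t-1) ≤ 4*d := by
    by_contra hcon
    push_neg at hcon
    set n : ℕ := t - 1 with hndef
    have hn1 : 1 ≤ n := by omega
    have hn2 : 2 ≤ n := by
      rcases Nat.lt_or_ge n 2 with hlt | hge
      · have hn : n = 1 := by omega
        rw [hn] at hcon; omega
      · exact hge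
    set a' : ℕ := (n+1)/2 with ha'def
    set b' : ℕ := n/2 with hb'def
    have ha'1 : 1 ≤ a' := by omega
    have hb'1 : 1 ≤ b' := by omega
    have ha'q : a' ≤ q := by omega
    have hb'q : b' ≤ q := by omega
    have hsum' : a' + b' = n := by omega
    have hprod' : d ≤ a' * b' := by
      rcases Nat.even_or_odd n with ⟨k, hk⟩ | ⟨k, hk⟩
      · have ha : a' = k := by omega
        have hb : b' = k := by omega
        have hsq : (k+k)*(k+k) = 4*(k*k) := by ring
        rw [hk, hsq] at hcon
        rw [ha, hb]; omega
      · have ha : a' = k+1 := by omega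
        have hb : b' = k := by omega
        have hsq : (2*k+1)*(2*k+1) = 4*((k+1)*k) + 1 := by ring
        rw [hk, hsq] at hcon
        rw [ha, hb]; omega
    have hmem : fs2 (q - a') (q - b') ∈ Hypset q 2 d := by
      constructor
      · intro j
        fin_cases j
        · rw [show ((⟨0, by omega⟩ : Fin 2)) = (0 : Fin 2) from rfl, fs2_0]; omega
        · rw [show ((⟨1, by omega⟩ : Fin 2)) = (1 : Fin 2) from rfl, fs2_1]; omega
      · rw [Fin.prod_univ_two, fs2_0, fs2_1]
        have e1 : q - (q - a') = a' := by omega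
        have e2 : q - (q - b') = b' := by omega
        rw [e1, e2]; exact hprod'
    have hcontra := (hsub hmem).2
    rw [Fin.sum_univ_two, fs2_0, fs2_1] at hcontra
    omega
  set D : ℕ := Nat.sqrt (t*t - 4*d) with hDdef
  have hDsq : D*D ≤ t*t - 4*d := Nat.sqrt_le _
  set lo : ℕ := (2*q + 1 - t - D)/2 with hlodef
  have hbound : ∀ i ∈ Hypset q 2 d \ RMset q 2 (s-1),
      lo ≤ i 0 ∧ i 0 ≤ lo + D ∧ i 0 + i 1 = sn := by
    rintro i ⟨hiH, hiR⟩
    have hiprod : d ≤ (q - i 0) * (q - i 1) := by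
      have := hiH.2
      rwa [Fin.prod_univ_two] at this
    have hi0 : i 0 < q := hiH.1 0
    have hi1 : i 1 < q := hiH.1 1
    have hile : (i 0 : ℤ) + i 1 ≤ s := by
      have := (hsub hiH).2
      rwa [Fin.sum_univ_two] at this
    have hige : s ≤ (i 0 : ℤ) + i 1 := by
      by_contra hcon
      push_neg at hcon
      exact hiR ⟨hiH.1, by rw [Fin.sum_univ_two]; omega⟩
    have hisum : i 0 + i 1 = sn := by omega
    set a : ℕ := q - i 0 with hadef
    set b : ℕ := q - i 1 with hbdef
    have habt : a + b = t := by omega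
    set c : ℕ := max a b - min a b with hcdef
    have hc : c*c + 4*(a*b) = t*t := by
      rcases le_total a b with hle | hle
      · have hc' : c = b - a := by rw [hcdef, max_eq_right hle, min_eq_left hle]
        rw [hc', ← habt]
        zify [hle]
        ring
      · have hc' : c = a - b := by rw [hcdef, max_eq_left hle, min_eq_right hle]
        rw [hc', ← habt]
        zify [hle]
        ring
    have hcc : c*c ≤ t*t - 4*d := by
      have := hiprod
      omega
    have hcD : c ≤ D := by
      rw [hDdef]
      exact Nat.le_sqrt.mpr hcc
    have h2a : t ≤ 2*a + D ∧ 2*a ≤ t + D := by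
      rcases le_total a b with hle | hle
      · have hc' : c = b - a := by rw [hcdef, max_eq_right hle, min_eq_left hle]
        omega
      · have hc' : c = a - b := by rw [hcdef, max_eq_left hle, min_eq_right hle]
        omega
    refine ⟨?_, ?_, hisum⟩ <;> omega
  have hinj : Set.InjOn (fun i : Fin 2 →₀ ℕ => i 0) (Hypset q 2 d \ RMset q 2 (s-1)) := by
    intro i hi i' hi' hii
    simp only at hii
    have h1 := (hbound i hi).2.2
    have h2 := (hbound i' hi').2.2
    have e1 : i 1 = i' 1 := by omega
    ext j
    fin_cases j
    · exact hii
    · exact e1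
  have himg : (fun i : Fin 2 →₀ ℕ => i 0) '' (Hypset q 2 d \ RMset q 2 (s-1))
      ⊆ Set.Icc lo (lo+D) := by
    rintro k ⟨i, hi, rfl⟩
    exact ⟨(hbound i hi).1, (hbound i hi).2.1⟩
  have hcount : (Hypset q 2 d \ RMset q 2 (s-1)).ncard ≤ D + 1 := by
    calc (Hypset q 2 d \ RMset q 2 (s-1)).ncard
        = ((fun i : Fin 2 →₀ ℕ => i 0) '' (Hypset q 2 d \ RMset q 2 (s-1))).ncard :=
          (Set.ncard_image_of_injOn hinj).symm
      _ ≤ (Set.Icc lo (lo+D)).ncard := Set.ncard_le_ncard himg (Set.finite_Icc _ _)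
      _ ≤ D + 1 := by
          rw [← Finset.coe_Icc, Set.ncard_coe_finset, Nat.card_Icc]; omega
  have htt : t*t + 1 = (t-1)*(t-1) + 2*t := sq_pred_aux t ht2
  have hDn : D*D + 1 ≤ 2*t := by omega
  have hT4 : ((t:ℝ) - 1)*((t:ℝ)-1) ≤ 4*(d:ℝ) := by
    have hcast : ((t - 1 : ℕ) : ℝ) = (t:ℝ) - 1 := by
      have : (1:ℕ) ≤ t := by omega
      push_cast [this]
      ring
    calc ((t:ℝ)-1)*((t:ℝ)-1) = ((t-1:ℕ):ℝ) * ((t-1:ℕ):ℝ) := by rw [hcast]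
      _ ≤ ((4*d : ℕ) : ℝ) := by exact_mod_cast hkey
      _ = 4*(d:ℝ) := by push_cast; ring
  have hDr : (D:ℝ)*(D:ℝ) + 1 ≤ 2*(t:ℝ) := by exact_mod_cast hDn
  have htr : (2:ℝ) ≤ (t:ℝ) := by exact_mod_cast ht2
  have hD0 : (0:ℝ) ≤ (D:ℝ) := Nat.cast_nonneg _
  have hT : (t:ℝ) - 1 ≤ 2*x^2 := by
    have hTsq : ((t:ℝ) - 1)^2 ≤ (2*x^2)^2 := by
      have h1 : (2*x^2)^2 = 4*(x^4) := by ring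
      have h2 : ((t:ℝ) - 1)^2 = ((t:ℝ)-1)*((t:ℝ)-1) := by ring
      rw [h1, h2, hx4]
      exact hT4
    exact (pow_le_pow_iff_left₀ (by linarith) (by positivity) two_ne_zero).mp hTsq
  have hDfin : (D:ℝ) ≤ 2*x + 1 := by
    have hDsq' : (D:ℝ)^2 ≤ (2*x + 1)^2 := by nlinarith [hDr, hT, hx0]
    exact (pow_le_pow_iff_left₀ hD0 (by positivity) two_ne_zero).mp hDsq'
  calc ((Hypset q 2 d \ RMset q 2 (s-1)).ncard : ℝ) ≤ (D:ℝ) + 1 := by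
        exact_mod_cast hcount
    _ ≤ 2*(x+1) := by linarith
end
end

section
/- Let m ≥ 1 and let s be an integer with 0 ≤ s ≤ q-1. Then the cube code Cube_q(s,m) has length q^m, dimension (s+1)^m, and minimum distance exactly (q-s)^m. -/
/-! A nonzero polynomial `f` over `F = 𝔽_q` of degree at most `s` in each of `m` variables is
nonzero at at least `(q - s)^m` points. Splitting off one variable, the leading coefficient
of `f` is nonzero at `(q - s)^(m-1)` points of `F^(m-1)` by induction, and above each of them
`f` restricts to a nonzero univariate polynomial of degree `≤ s`, with at most `s` roots.
For `s < q` evaluation is injective on the cube (combinatorial Nullstellensatz), which gives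
the dimension, and
`∏ j, ∏ a ∈ S, (X j - a)` with `#S = s` attains the bound. -/

open MvPolynomial Finset Pointwise

noncomputable section

theorem Polynomial.card_sub_natDegree_le_card_eval_ne_zero_s11 {F : Type*} [Field F] [Fintype F]
    [DecidableEq F] {u : Polynomial F} (hu : u ≠ 0) :
    Fintype.card F - u.natDegree ≤ #{t | u.eval t ≠ 0} := by
  have hzeros : #{t | u.eval t = 0} ≤ u.natDegree :=
    Polynomial.card_le_degree_of_subset_roots fun t ht => by
      simpa [Polynomial.mem_roots hu] using ht
  have := Finset.card_filter_add_card_filter_not (s := univ) (fun t => u.eval t = 0)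
  rw [card_univ] at this
  simp only [ne_eq]
  omega

theorem Fintype.card_filter_fin_succ_pi {α : Type*} [Fintype α] {m : ℕ}
    (P : (Fin (m + 1) → α) → Prop) [DecidablePred P] :
    #{z | P z} = ∑ x : Fin m → α, #{t | P (Fin.cons t x)} := by
  simp only [Finset.card_filter]
  rw [← (Fin.consEquiv fun _ => α).sum_comp, Fintype.sum_prod_type_right]
  rfl

namespace MvPolynomial

theorem degreeOf_prod_prod_X_sub_C_le {F σ : Type*} [Field F] [Fintype σ]
    [DecidableEq σ] (S : Finset F) (j : σ) :
    degreeOf j (∏ i, ∏ a ∈ S, (X i - C a)) ≤ #S :=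
  calc degreeOf j (∏ i, ∏ a ∈ S, (X i - C a))
      ≤ ∑ i, ∑ a ∈ S, degreeOf j (X i - C a : MvPolynomial σ F) :=
        (degreeOf_prod_le _ _ _).trans (sum_le_sum fun i _ => degreeOf_prod_le _ _ _)
    _ ≤ ∑ i, ∑ _a ∈ S, if j = i then 1 else 0 :=
        sum_le_sum fun i _ => sum_le_sum fun a _ =>
          (degreeOf_sub_le _ _ _).trans (by simp [degreeOf_X, degreeOf_C])
    _ = #S := by simp

theorem eval_prod_prod_X_sub_C_ne_zero_iff {F σ : Type*} [Field F] [Fintype σ]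
    (S : Finset F) (x : σ → F) :
    eval x (∏ i, ∏ a ∈ S, (X i - C a)) ≠ 0 ↔ ∀ i, x i ∉ S := by
  simp [prod_ne_zero_iff, sub_eq_zero]

variable {F : Type} [Field F] [Fintype F] [DecidableEq F]

theorem card_sub_pow_le_card_eval_ne_zero {s m : ℕ} {f : MvPolynomial (Fin m) F} (hf : f ≠ 0)
    (hdeg : ∀ j, f.degreeOf j ≤ s) : (Fintype.card F - s) ^ m ≤ #{x | eval x f ≠ 0} := by
  induction m with
  | zero =>
    have hC : eval (fun _ => 0) f ≠ 0 := by
      rw [eq_C_of_isEmpty f, eval_C]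
      rintro h
      exact hf (by rw [eq_C_of_isEmpty f, h, map_zero])
    exact (pow_zero _).trans_le (one_le_card.mpr ⟨_, mem_filter.mpr ⟨mem_univ _, hC⟩⟩)
  | succ m ih =>
    let p := finSuccEquiv F m f
    let g := p.leadingCoeff
    have hg : g ≠ 0 := Polynomial.leadingCoeff_ne_zero.mpr <| by simpa [p] using hf
    have hg_deg : ∀ j, g.degreeOf j ≤ s := fun j =>
      (degreeOf_coeff_finSuccEquiv f j _).trans (hdeg j.succ)
    have hfiber : ∀ x ∈ ({x | eval x g ≠ 0} : Finset _),
        Fintype.card F - s ≤ #{t | eval (Fin.cons t x) f ≠ 0} := by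
      intro x hx
      let u := p.map (eval x)
      have hu : u ≠ 0 := fun h => (mem_filter.mp hx).2 <| by
        rw [show eval x g = u.coeff p.natDegree from (Polynomial.coeff_map _ _).symm, h,
          Polynomial.coeff_zero]
      have hudeg : u.natDegree ≤ s :=
        Polynomial.natDegree_map_le.trans ((natDegree_finSuccEquiv f).trans_le (hdeg 0))
      simpa only [eval_eq_eval_mv_eval'] using (Nat.sub_le_sub_left hudeg _).trans
        (Polynomial.card_sub_natDegree_le_card_eval_ne_zero_s11 hu)
    calc (Fintype.card F - s) ^ (m + 1)
        = (Fintype.card F - s) ^ m * (Fintype.card F - s) := pow_succ _ _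
      _ ≤ #{x | eval x g ≠ 0} * (Fintype.card F - s) :=
          Nat.mul_le_mul_right _ (ih hg hg_deg)
      _ ≤ ∑ x ∈ {x | eval x g ≠ 0}, #{t | eval (Fin.cons t x) f ≠ 0} := by
          rw [← smul_eq_mul, ← sum_const]; exact sum_le_sum hfiber
      _ ≤ ∑ x, #{t | eval (Fin.cons t x) f ≠ 0} := sum_le_sum_of_subset (subset_univ _)
      _ = #{z | eval z f ≠ 0} := (Fintype.card_filter_fin_succ_pi fun z => eval z f ≠ 0).symm

end MvPolynomial

theorem card_cubeset (m s : ℕ) : Nat.card (Cubeset m s) = (s + 1) ^ m := by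
  let e : Cubeset m s ≃ (Fin m → Set.Iic s) :=
    (Finsupp.equivFunOnFinite.subtypeEquiv (q := fun g => ∀ j, g j ∈ Set.Iic s)
      fun _ => Iff.rfl).trans Equiv.subtypePiEquivPi
  rw [Nat.card_congr e, Nat.card_fun]
  simp

theorem minDist_eq_of_forall_le_of_exists {F : Type} [Field F] [Fintype F] [DecidableEq F]
    {m d : ℕ} {C : Set ((Fin m → F) → F)} (hle : ∀ v ∈ C, v ≠ 0 → d ≤ hammingNorm v)
    {v : (Fin m → F) → F} (hv : v ∈ C) (hv0 : v ≠ 0) (hvd : hammingNorm v = d) :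
    minDist C = d :=
  le_antisymm (Nat.sInf_le ⟨v, hv, hv0, hvd⟩)
    (le_csInf ⟨d, v, hv, hv0, hvd⟩ fun _ ⟨w, hw, hw0, hwd⟩ => hwd ▸ hle w hw hw0)

section CubeCode

variable {F : Type} [Field F] {m s : ℕ}

theorem support_subset_cubeset_iff {f : MvPolynomial (Fin m) F} :
    (f.support : Set (Fin m →₀ ℕ)) ⊆ Cubeset m s ↔ ∀ j, f.degreeOf j ≤ s := by
  simp only [degreeOf_le_iff, Set.subset_def, Finset.mem_coe, Cubeset]
  exact ⟨fun h j x hx => h x hx j, fun h x hx j => h j x hx⟩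

variable (F m) in
def evalPtₗ : MvPolynomial (Fin m) F →ₗ[F] (Fin m → F) → F :=
  LinearMap.pi fun P => (aeval P).toLinearMap

theorem evalPtₗ_apply (f : MvPolynomial (Fin m) F) : evalPtₗ F m f = evalPt f :=
  funext fun P => by simp [evalPtₗ, evalPt]

theorem span_monomialCode (A : Set (Fin m →₀ ℕ)) :
    Submodule.span F (monomialCode F m A) = (restrictSupport F A).map (evalPtₗ F m) := by
  have : monomialCode F m A = evalPtₗ F m '' restrictSupport F A := by
    ext v
    simp [monomialCode, mem_restrictSupport_iff, evalPtₗ_apply, eq_comm]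
  rw [this, Submodule.span_image, Submodule.span_eq]

variable [Fintype F]

theorem eq_zero_of_evalPt_eq_zero {f : MvPolynomial (Fin m) F} (hdeg : ∀ j, f.degreeOf j ≤ s)
    (hs : s < Fintype.card F) (h : evalPt f = 0) : f = 0 :=
  eq_zero_of_eval_zero_at_prod_finset f (fun _ => univ)
    (fun j => (hdeg j).trans_lt (by simpa using hs)) fun x _ => congrFun h x

theorem finrank_span_monomialCode_cubeset (hs : s < Fintype.card F) :
    Module.finrank F (Submodule.span F (monomialCode F m (Cubeset m s))) = (s + 1) ^ m := by
  have hinj :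
      Function.Injective ((evalPtₗ F m).comp (restrictSupport F (Cubeset m s)).subtype) := by
    rw [← LinearMap.ker_eq_bot, LinearMap.ker_eq_bot']
    rintro ⟨f, hf⟩ h
    exact Subtype.ext <| eq_zero_of_evalPt_eq_zero (support_subset_cubeset_iff.mp hf) hs <| by
      simpa [evalPtₗ_apply] using h
  rw [span_monomialCode, ← Submodule.range_subtype (restrictSupport F _),
    ← LinearMap.range_comp,
    LinearMap.finrank_range_of_inj hinj,
    Module.finrank_eq_nat_card_basis (basisRestrictSupport F _), card_cubeset]

variable [DecidableEq F]

theorem hammingNorm_evalPt (f : MvPolynomial (Fin m) F) :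
    hammingNorm (evalPt f) = #{x | eval x f ≠ 0} :=
  rfl

theorem card_sub_pow_le_hammingNorm {v : (Fin m → F) → F}
    (hv : v ∈ monomialCode F m (Cubeset m s)) (hv0 : v ≠ 0) :
    (Fintype.card F - s) ^ m ≤ hammingNorm v := by
  obtain ⟨f, hf, rfl⟩ := hv
  have hf0 : f ≠ 0 := by
    rintro rfl
    exact hv0 (funext fun P => by simp [evalPt])
  exact hammingNorm_evalPt f ▸
    card_sub_pow_le_card_eval_ne_zero hf0 (support_subset_cubeset_iff.mp hf)

theorem exists_mem_monomialCode_cubeset_hammingNorm_eq (hs : s ≤ Fintype.card F) :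
    ∃ v ∈ monomialCode F m (Cubeset m s), hammingNorm v = (Fintype.card F - s) ^ m := by
  obtain ⟨S, -, hS⟩ := exists_subset_card_eq (s := (univ : Finset F)) (n := s)
    (by simpa using hs)
  have hdeg (j : Fin m) : degreeOf j (∏ i, ∏ a ∈ S, (X i - C a)) ≤ s :=
    hS ▸ degreeOf_prod_prod_X_sub_C_le S j
  refine ⟨_, ⟨_, support_subset_cubeset_iff.mpr hdeg, rfl⟩, ?_⟩
  have : ({x | eval x (∏ i, ∏ a ∈ S, (X i - C a)) ≠ 0} : Finset (Fin m → F)) =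
      Fintype.piFinset fun _ => Sᶜ := by
    ext x
    simp only [mem_filter, mem_univ, true_and, Fintype.mem_piFinset, mem_compl,
      eval_prod_prod_X_sub_C_ne_zero_iff]
  rw [hammingNorm_evalPt, this, Fintype.card_piFinset]
  simp [card_compl, hS]

end CubeCode

theorem statement11_general (F : Type) [Field F] [Fintype F] [DecidableEq F]
    (q m s : ℕ) (hq : Fintype.card F = q) (hs : s ≤ q - 1) :
    Fintype.card (Fin m → F) = q ^ m ∧
    Module.finrank F (Submodule.span F (monomialCode F m (Cubeset m s))) = (s + 1) ^ m ∧
    minDist (monomialCode F m (Cubeset m s)) = (q - s) ^ m := by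
  subst hq
  have hsq : s < Fintype.card F := by have := Fintype.card_pos (α := F); omega
  obtain ⟨v, hv, hvd⟩ := exists_mem_monomialCode_cubeset_hammingNorm_eq (m := m) hsq.le
  have hv0 : v ≠ 0 := by
    rintro rfl
    exact (pow_pos (Nat.sub_pos_of_lt hsq) m).ne (by rwa [hammingNorm_zero] at hvd)
  exact ⟨by simp, finrank_span_monomialCode_cubeset hsq,
    minDist_eq_of_forall_le_of_exists (fun _ => card_sub_pow_le_hammingNorm) hv hv0 hvd⟩

/-- `Cube_q(s,m)` has length `q^m`, dimension `(s+1)^m`, and minimum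
distance exactly `(q-s)^m`. -/
theorem statement11 (F : Type) [Field F] [Fintype F] [DecidableEq F]
    (q m s : ℕ) (hq : Fintype.card F = q) (hm : 1 ≤ m) (hs : s ≤ q - 1) :
    Fintype.card (Fin m → F) = q ^ m ∧
    Module.finrank F (Submodule.span F (monomialCode F m (Cubeset m s))) = (s + 1) ^ m ∧
    minDist (monomialCode F m (Cubeset m s)) = (q - s) ^ m :=
  statement11_general F q m s hq hs
end
end

section
/- Let m ≥ 1, let d be an integer with 1 ≤ d ≤ q^m, and let s be an integer with 0 ≤ s ≤ q-1. Then Cube_q(s,m) ⊆ Hyp_q(d,m) if and only if s ≤ q - d^{1/m}. -/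
open MvPolynomial Finset Pointwise

noncomputable section

lemma real_equiv {q m d s : ℕ} (hm : 1 ≤ m) (hd1 : 1 ≤ d) (hsq : s < q) :
    d ≤ (q - s) ^ m ↔ (s : ℝ) ≤ (q : ℝ) - (d : ℝ) ^ ((1 : ℝ) / m) := by
  have hx0 : (0 : ℝ) ≤ (q : ℝ) - s := by
    have : (s : ℝ) ≤ q := by exact_mod_cast hsq.le
    linarith
  have hcast : ((q - s : ℕ) : ℝ) = (q : ℝ) - s := by
    push_cast [Nat.cast_sub hsq.le]; ring
  have hm0 : (m : ℝ) ≠ 0 := by exact_mod_cast Nat.one_le_iff_ne_zero.mp hm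
  have key : (d : ℝ) ≤ ((q : ℝ) - s) ^ m ↔ (d : ℝ) ^ ((1 : ℝ) / m) ≤ (q : ℝ) - s := by
    constructor
    · intro h
      have := Real.rpow_le_rpow (by positivity) h (by positivity : (0:ℝ) ≤ 1 / m)
      calc (d : ℝ) ^ ((1 : ℝ) / m) ≤ (((q : ℝ) - s) ^ m) ^ ((1 : ℝ) / m) := this
        _ = ((q : ℝ) - s) ^ ((m : ℝ) * (1 / m)) := by
            rw [← Real.rpow_natCast ((q : ℝ) - s) m, ← Real.rpow_mul hx0]
        _ = (q : ℝ) - s := by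
            rw [mul_one_div, div_self hm0, Real.rpow_one]
    · intro h
      calc (d : ℝ) = ((d : ℝ) ^ ((1 : ℝ) / m)) ^ m := by
            rw [← Real.rpow_natCast ((d:ℝ) ^ ((1:ℝ)/m)) m, ← Real.rpow_mul (by positivity),
              one_div, inv_mul_cancel₀ hm0, Real.rpow_one]
        _ ≤ ((q : ℝ) - s) ^ m := pow_le_pow_left₀ (by positivity) h m
  constructor
  · intro h
    have : (d : ℝ) ≤ ((q : ℝ) - s) ^ m := by
      rw [← hcast]; exact_mod_cast h
    linarith [key.mp this]
  · intro h
    have : (d : ℝ) ^ ((1 : ℝ) / m) ≤ (q : ℝ) - s := by linarith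
    have := key.mpr this
    rw [← hcast] at this
    exact_mod_cast this

/-- `Cube_q(s,m) ⊆ Hyp_q(d,m)` iff `s ≤ q - d^{1/m}`. -/
theorem statement12 (F : Type) [Field F] [Fintype F] [DecidableEq F]
    (q m d s : ℕ) (hq : Fintype.card F = q) (hm : 1 ≤ m) (hd1 : 1 ≤ d) (hd2 : d ≤ q ^ m)
    (hs : s ≤ q - 1) :
    monomialCode F m (Cubeset m s) ⊆ monomialCode F m (Hypset q m d) ↔
      (s : ℝ) ≤ (q : ℝ) - (d : ℝ) ^ ((1 : ℝ) / m) := by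
  have hq1 : 1 ≤ q := hq ▸ Fintype.card_pos
  have hsq : s < q := lt_of_le_of_lt hs (Nat.sub_lt hq1 one_pos)
  rw [← real_equiv hm hd1 hsq]
  constructor
  · -- code inclusion → d ≤ (q-s)^m
    intro hsub
    set c : Fin m →₀ ℕ := Finsupp.equivFunOnFinite.symm (fun _ => s) with hc
    have hcj : ∀ j, c j = s := fun j => rfl
    set f : MvPolynomial (Fin m) F := monomial c (1 : F) with hf
    have hfsupp : f.support = {c} := support_monomial_subset.antisymm (by
      intro x hx
      simp only [Finset.mem_singleton] at hx
      subst hx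
      simp [hf, mem_support_iff, coeff_monomial])
    have hmem : evalPt f ∈ monomialCode F m (Cubeset m s) := by
      refine ⟨f, ?_, rfl⟩
      rw [hfsupp]
      intro x hx
      simp only [Finset.coe_singleton, Set.mem_singleton_iff] at hx
      subst hx
      intro j; rw [hcj]
    obtain ⟨g, hgsupp, hgeq⟩ := hsub hmem
    have hfg : f = g := by
      have hz : f - g = 0 := by
        apply MvPolynomial.eq_zero_of_eval_eq_zero
        · intro v
          have := congrFun hgeq v
          simp only [evalPt] at this
          simp [map_sub, ← this]
        · rw [mem_restrictDegree]
          intro a ha j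
          rw [hq]
          have := MvPolynomial.support_sub (Fin m) f g ha
          rw [Finset.mem_union, hfsupp, Finset.mem_singleton] at this
          rcases this with h | h
          · subst h; rw [hcj]; exact hs
          · have := (hgsupp h).1 j
            omega
      exact sub_eq_zero.mp hz
    have hcH : c ∈ Hypset q m d := by
      apply hgsupp
      rw [← hfg, hfsupp]
      exact Finset.mem_singleton_self c
    have := hcH.2
    calc d ≤ ∏ j, (q - c j) := hcH.2
      _ = (q - s) ^ m := by
          simp only [hcj]
          rw [Finset.prod_const, Finset.card_univ, Fintype.card_fin]
  · -- d ≤ (q-s)^m → code inclusion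
    intro hle v ⟨f, hfsupp, hfv⟩
    refine ⟨f, ?_, hfv⟩
    intro i hi
    have hiC : ∀ j, i j ≤ s := hfsupp hi
    refine ⟨fun j => lt_of_le_of_lt (hiC j) hsq, ?_⟩
    calc d ≤ (q - s) ^ m := hle
      _ = ∏ _j : Fin m, (q - s) := by
          rw [Finset.prod_const, Finset.card_univ, Fintype.card_fin]
      _ ≤ ∏ j, (q - i j) := Finset.prod_le_prod (fun _ _ => Nat.zero_le _)
          (fun j _ => Nat.sub_le_sub_left (hiC j) q)
end
end

section
/- Let m ≥ 1, let d be an integer with 1 ≤ d ≤ q^m, and let s' be an integer with 0 ≤ s' ≤ q-1. Then Hyp_q(d,m) ⊆ Cube_q(s',m) if and only if s' ≥ q - ⌈d/q^{m-1}⌉. -/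
open MvPolynomial Finset Pointwise

noncomputable section

/-- Two polynomials with all individual degrees `< card F` that agree as functions are equal. -/
lemma evalPt_inj_aux {F : Type} [Field F] [Fintype F] {m : ℕ}
    (f g : MvPolynomial (Fin m) F)
    (hf : ∀ s ∈ f.support, ∀ j, s j ≤ Fintype.card F - 1)
    (hg : ∀ s ∈ g.support, ∀ j, s j ≤ Fintype.card F - 1)
    (h : evalPt f = evalPt g) : f = g := by
  have hfg : f - g ∈ MvPolynomial.restrictDegree (Fin m) F (Fintype.card F - 1) :=
    Submodule.sub_mem _ (by rw [MvPolynomial.mem_restrictDegree]; exact hf)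
      (by rw [MvPolynomial.mem_restrictDegree]; exact hg)
  have : f - g = 0 := by
    refine MvPolynomial.eq_zero_of_eval_eq_zero (p := f - g) (h := fun v => ?_) (hp := hfg)
    have := congrFun h v
    simp only [evalPt] at this
    simp [this]
  exact sub_eq_zero.mp this

/-- `Hyp_q(d,m) ⊆ Cube_q(s',m)` iff `s' ≥ q - ⌈d/q^{m-1}⌉`. -/
theorem statement13 (F : Type) [Field F] [Fintype F] [DecidableEq F]
    (q m d s' : ℕ) (hq : Fintype.card F = q) (hm : 1 ≤ m) (hd1 : 1 ≤ d) (hd2 : d ≤ q ^ m)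
    (hs' : s' ≤ q - 1) :
    monomialCode F m (Hypset q m d) ⊆ monomialCode F m (Cubeset m s') ↔
      (q : ℤ) - ⌈(d : ℝ) / (q : ℝ) ^ (m - 1)⌉ ≤ (s' : ℤ) := by
  classical
  have hq2 : 2 ≤ q := hq ▸ Fintype.one_lt_card
  have hq0 : 0 < q := by omega
  have hr : (0:ℝ) < (q:ℝ) ^ (m - 1) := by positivity
  -- ceiling characterization
  have hceil : ∀ k : ℤ, ⌈(d : ℝ) / (q : ℝ) ^ (m - 1)⌉ ≤ k ↔ (d:ℝ) ≤ k * (q:ℝ) ^ (m - 1) := by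
    intro k; rw [Int.ceil_le, div_le_iff₀ hr]
  set t : ℤ := ⌈(d : ℝ) / (q : ℝ) ^ (m - 1)⌉ with ht
  have ht1 : 1 ≤ t := by
    have : (0:ℝ) < (d : ℝ) / (q : ℝ) ^ (m - 1) := by positivity
    exact Int.ceil_pos.mpr this
  have htq : t ≤ q := by
    rw [ht, hceil]
    have : ((q:ℝ)) * (q:ℝ) ^ (m - 1) = (q:ℝ) ^ m := by
      rw [← pow_succ']
      congr 1
      omega
    push_cast
    rw [this]
    exact_mod_cast hd2
  constructor
  · intro hsub
    -- use the monomial with exponent `q - t` at coordinate `j0`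
    obtain ⟨j0⟩ : Nonempty (Fin m) := ⟨⟨0, hm⟩⟩
    set k : ℕ := q - t.toNat with hk
    have htn : (t.toNat : ℤ) = t := Int.toNat_of_nonneg (by omega)
    have htnq : t.toNat ≤ q := by omega
    have hkq : (k:ℤ) = (q:ℤ) - t := by rw [hk]; push_cast [htnq]; omega
    set a : Fin m →₀ ℕ := Finsupp.single j0 k with ha
    have haj : ∀ j, a j ≤ k := by
      intro j
      rw [ha, Finsupp.single_apply]
      split <;> omega
    have haH : a ∈ Hypset q m d := by
      constructor
      · intro j
        have := haj j
        have : a j ≤ k := this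
        have hk1 : k ≤ q - 1 := by omega
        omega
      · have hprod : ∏ j, (q - a j) = t.toNat * q ^ (m - 1) := by
          rw [← Finset.mul_prod_erase Finset.univ _ (Finset.mem_univ j0)]
          have h1 : q - a j0 = t.toNat := by
            rw [ha, Finsupp.single_apply, if_pos rfl]; omega
          have h2 : ∏ j ∈ Finset.univ.erase j0, (q - a j) = q ^ (m - 1) := by
            rw [Finset.prod_congr rfl (fun j hj => ?_), Finset.prod_const,
              Finset.card_erase_of_mem (Finset.mem_univ j0), Finset.card_univ,
              Fintype.card_fin]
            rw [ha, Finsupp.single_apply, if_neg (Ne.symm (Finset.ne_of_mem_erase hj))]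
            omega
          rw [h1, h2]
        rw [hprod]
        have : (d:ℝ) ≤ (t.toNat : ℤ) * (q:ℝ) ^ (m - 1) := by
          rw [htn, ← hceil]
        have : (d:ℝ) ≤ (t.toNat : ℝ) * (q:ℝ) ^ (m - 1) := by
          push_cast at this ⊢
          exact this
        exact_mod_cast this
    have hmem : evalPt (MvPolynomial.monomial a (1:F)) ∈ monomialCode F m (Hypset q m d) := by
      refine ⟨_, ?_, rfl⟩
      rw [MvPolynomial.support_monomial, if_neg one_ne_zero]
      simpa using haH
    obtain ⟨g, hgsupp, hgev⟩ := hsub hmem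
    have heq : MvPolynomial.monomial a (1:F) = g := by
      refine evalPt_inj_aux _ _ ?_ ?_ hgev
      · intro s hs j
        rw [MvPolynomial.support_monomial, if_neg one_ne_zero] at hs
        simp only [Finset.mem_singleton] at hs
        subst hs
        have := haH.1 j
        omega
      · intro s hs j
        have : s ∈ Cubeset m s' := hgsupp hs
        have := this j
        omega
    have haC : a ∈ Cubeset m s' := by
      apply hgsupp
      rw [← heq, MvPolynomial.support_monomial, if_neg one_ne_zero]
      simp
    have : a j0 ≤ s' := haC j0
    have : k ≤ s' := by rwa [ha, Finsupp.single_apply, if_pos rfl] at this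
    omega
  · intro hle v hv
    obtain ⟨f, hfsupp, rfl⟩ := hv
    refine ⟨f, ?_, rfl⟩
    intro s hs
    have hsH : s ∈ Hypset q m d := hfsupp hs
    intro j
    have hlt := hsH.1 j
    have hprod : ∏ i, (q - s i) ≤ (q - s j) * q ^ (m - 1) := by
      rw [← Finset.mul_prod_erase Finset.univ _ (Finset.mem_univ j)]
      refine Nat.mul_le_mul_left _ ?_
      calc ∏ i ∈ Finset.univ.erase j, (q - s i)
          ≤ ∏ _i ∈ Finset.univ.erase j, q := Finset.prod_le_prod' (fun i _ => Nat.sub_le _ _)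
        _ = q ^ (m - 1) := by
            rw [Finset.prod_const, Finset.card_erase_of_mem (Finset.mem_univ j),
              Finset.card_univ, Fintype.card_fin]
    have hd : d ≤ (q - s j) * q ^ (m - 1) := le_trans hsH.2 hprod
    have hqsj : ((q - s j : ℕ) : ℤ) = (q:ℤ) - s j := by omega
    have : t ≤ ((q - s j : ℕ) : ℤ) := by
      rw [ht, hceil]
      have : (d:ℝ) ≤ ((q - s j : ℕ) : ℝ) * (q:ℝ) ^ (m - 1) := by
        have := hd
        calc (d:ℝ) ≤ (((q - s j) * q ^ (m - 1) : ℕ) : ℝ) := by exact_mod_cast hd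
          _ = ((q - s j : ℕ) : ℝ) * (q:ℝ) ^ (m - 1) := by push_cast; ring
      exact_mod_cast this
    rw [hqsj] at this
    omega
end
end
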